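/- arXiv:2205.00448 — 12 statements merged into one kernel-verified Lean document; each statement's English description precedes it below -/
import Mathlib

section
/- Let f : X → Z and g : Y → Z be surjective functions with pullback P := {p : X × Y // f p.1 = g p.2} and projections π₁, π₂. For all upward-closed α₁ ∈ M X and α₂ ∈ M Y with (M f) α₁ = (M g) α₂ there exists an upward-closed β ∈ M P with (M π₁) β = α₁ and (M π₂) β = α₂. In other words, the monotone neighbourhood functor M preserves surjective weak pullbacks. -/
/-- The monotone neighbourhood functor on objects: upward-closed collections of subsets. -/
def UpClosed {X : Type*} (α : Set (Set X)) : Prop :=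
  ∀ A B : Set X, A ∈ α → A ⊆ B → B ∈ α

/-- The monotone neighbourhood functor on morphisms. -/
def Mmap {X Y : Type*} (h : X → Y) (α : Set (Set X)) : Set (Set Y) :=
  {B : Set Y | h ⁻¹' B ∈ α}

/-- The monotone neighbourhood functor preserves surjective weak pullbacks. -/
theorem monotone_nbhd_preserves_surjective_weak_pullbacks
    {X Y Z : Type*} (f : X → Z) (g : Y → Z)
    (hf : Function.Surjective f) (hg : Function.Surjective g)
    (α₁ : Set (Set X)) (α₂ : Set (Set Y))
    (hα₁ : UpClosed α₁) (hα₂ : UpClosed α₂)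
    (heq : Mmap f α₁ = Mmap g α₂) :
    ∃ β : Set (Set {p : X × Y // f p.1 = g p.2}),
      UpClosed β ∧
      Mmap (fun p : {p : X × Y // f p.1 = g p.2} => p.1.1) β = α₁ ∧
      Mmap (fun p : {p : X × Y // f p.1 = g p.2} => p.1.2) β = α₂ := by
  set P := {p : X × Y // f p.1 = g p.2} with hP
  set π₁ : P → X := fun p => p.1.1 with hπ₁
  set π₂ : P → Y := fun p => p.1.2 with hπ₂
  refine ⟨{W : Set P | (∃ A ∈ α₁, π₁ ⁻¹' A ⊆ W) ∨ (∃ B ∈ α₂, π₂ ⁻¹' B ⊆ W)}, ?_, ?_, ?_⟩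
  · rintro W W' (⟨A, hA, hAW⟩ | ⟨B, hB, hBW⟩) hWW'
    · exact Or.inl ⟨A, hA, hAW.trans hWW'⟩
    · exact Or.inr ⟨B, hB, hBW.trans hWW'⟩
  · ext A'
    constructor
    · rintro (⟨A, hA, hAA'⟩ | ⟨B, hB, hBA'⟩)
      · -- π₁ ⁻¹' A ⊆ π₁ ⁻¹' A', and π₁ is surjective
        refine hα₁ A A' hA ?_
        intro x hx
        obtain ⟨y, hy⟩ := hg (f x)
        exact hAA' (show π₁ ⟨(x, y), hy.symm⟩ ∈ A from hx)
      · -- use D = (f '' A'ᶜ)ᶜ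
        have hD : g ⁻¹' (f '' A'ᶜ)ᶜ ∈ α₂ := by
          refine hα₂ B _ hB ?_
          intro y hy hmem
          obtain ⟨x, hx, hfx⟩ := hmem
          exact hx (hBA' (show π₂ (⟨(x, y), hfx⟩ : P) ∈ B from hy))
        have hD' : f ⁻¹' (f '' A'ᶜ)ᶜ ∈ α₁ := by
          have : (f '' A'ᶜ)ᶜ ∈ Mmap f α₁ := heq ▸ hD
          exact this
        refine hα₁ _ A' hD' ?_
        intro x hx
        by_contra hxA'
        exact hx ⟨x, hxA', rfl⟩
    · intro hA'
      exact Or.inl ⟨A', hA', fun p hp => hp⟩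
  · ext B'
    constructor
    · rintro (⟨A, hA, hAB'⟩ | ⟨B, hB, hBB'⟩)
      · have hD : f ⁻¹' (g '' B'ᶜ)ᶜ ∈ α₁ := by
          refine hα₁ A _ hA ?_
          intro x hx hmem
          obtain ⟨y, hy, hgy⟩ := hmem
          exact hy (hAB' (show π₁ (⟨(x, y), hgy.symm⟩ : P) ∈ A from hx))
        have hD' : g ⁻¹' (g '' B'ᶜ)ᶜ ∈ α₂ := by
          have : (g '' B'ᶜ)ᶜ ∈ Mmap g α₂ := heq ▸ hD
          exact this
        refine hα₂ _ B' hD' ?_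
        intro y hy
        by_contra hyB'
        exact hy ⟨y, hyB', rfl⟩
      · refine hα₂ B B' hB ?_
        intro y hy
        obtain ⟨x, hx⟩ := hf (g y)
        exact hBB' (show π₂ ⟨(x, y), hx⟩ ∈ B from hy)
    · intro hB'
      exact Or.inr ⟨B', hB', fun p hp => hp⟩
end

section
/- Let f : X → Z and g : Y → Z be surjective functions with pullback P := {p : X × Y // f p.1 = g p.2} and projections π₁, π₂, and let α₁ ∈ M X and α₂ ∈ M Y be upward closed. Then (M f) α₁ = (M g) α₂ if and only if α₁ and α₂ are compatible, i.e., for every U ∈ α₁ one has π₂ '' (π₁ ⁻¹' U) ∈ α₂ and for every V ∈ α₂ one has π₁ '' (π₂ ⁻¹' V) ∈ α₁. -/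
lemma pullback_image_eq {X Y Z : Type*} (f : X → Z) (g : Y → Z) (U : Set X) :
    (fun p : {p : X × Y // f p.1 = g p.2} => p.1.2) ''
      ((fun p : {p : X × Y // f p.1 = g p.2} => p.1.1) ⁻¹' U) = g ⁻¹' (f '' U) := by
  ext y
  constructor
  · rintro ⟨⟨⟨x, y'⟩, hp⟩, hx, rfl⟩
    exact ⟨x, hx, hp⟩
  · rintro ⟨x, hx, hxy⟩
    exact ⟨⟨(x, y), hxy⟩, hx, rfl⟩

lemma pullback_image_eq' {X Y Z : Type*} (f : X → Z) (g : Y → Z) (V : Set Y) :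
    (fun p : {p : X × Y // f p.1 = g p.2} => p.1.1) ''
      ((fun p : {p : X × Y // f p.1 = g p.2} => p.1.2) ⁻¹' V) = f ⁻¹' (g '' V) := by
  ext x
  constructor
  · rintro ⟨⟨⟨x', y⟩, hp⟩, hy, rfl⟩
    exact ⟨y, hy, hp.symm⟩
  · rintro ⟨y, hy, hxy⟩
    exact ⟨⟨(x, y), hxy.symm⟩, hy, rfl⟩

/-- Compatibility lemma for the monotone neighbourhood functor: over a surjective pullback,
two upward-closed neighbourhood collections have the same image over `Z` iff they are
compatible. -/
theorem monotone_nbhd_compatibility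
    {X Y Z : Type*} (f : X → Z) (g : Y → Z)
    (hf : Function.Surjective f) (hg : Function.Surjective g)
    (α₁ : Set (Set X)) (α₂ : Set (Set Y))
    (hα₁ : UpClosed α₁) (hα₂ : UpClosed α₂) :
    Mmap f α₁ = Mmap g α₂ ↔
      ((∀ U ∈ α₁,
          (fun p : {p : X × Y // f p.1 = g p.2} => p.1.2) ''
            ((fun p : {p : X × Y // f p.1 = g p.2} => p.1.1) ⁻¹' U) ∈ α₂) ∧
       (∀ V ∈ α₂,
          (fun p : {p : X × Y // f p.1 = g p.2} => p.1.1) ''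
            ((fun p : {p : X × Y // f p.1 = g p.2} => p.1.2) ⁻¹' V) ∈ α₁)) := by
  constructor
  · intro h
    constructor
    · intro U hU
      rw [pullback_image_eq]
      have h1 : f ⁻¹' (f '' U) ∈ α₁ := hα₁ U _ hU (Set.subset_preimage_image f U)
      have : f '' U ∈ Mmap g α₂ := h ▸ h1
      exact this
    · intro V hV
      rw [pullback_image_eq']
      have h1 : g ⁻¹' (g '' V) ∈ α₂ := hα₂ V _ hV (Set.subset_preimage_image g V)
      have : g '' V ∈ Mmap f α₁ := h.symm ▸ h1
      exact this
  · rintro ⟨h1, h2⟩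
    ext B
    constructor
    · intro hB
      have := h1 _ hB
      rw [pullback_image_eq, Set.image_preimage_eq B hf] at this
      exact this
    · intro hB
      have := h2 _ hB
      rw [pullback_image_eq', Set.image_preimage_eq B hg] at this
      exact this
end

section
/- For a commutative monoid M, the monoid-weighted functor W_M preserves surjective weak pullbacks if and only if M is refinable. Concretely: M is refinable if and only if for all surjective functions f : X → Z and g : Y → Z with pullback P := {p : X × Y // f p.1 = g p.2} and projections π₁, π₂, and for all μ : X →₀ M and ν : Y →₀ M with Finsupp.mapDomain f μ = Finsupp.mapDomain g ν, there exists ρ : P →₀ M with Finsupp.mapDomain π₁ ρ = μ and Finsupp.mapDomain π₂ ρ = ν. -/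
universe u

/-- A commutative monoid is refinable if every pair of (nonempty) sums with equal value
admits a common refinement matrix. -/
def Refinable (M : Type*) [AddCommMonoid M] : Prop :=
  ∀ (n k : ℕ), 1 ≤ n → 1 ≤ k → ∀ (a : Fin n → M) (b : Fin k → M),
    (∑ i, a i) = (∑ j, b j) →
    ∃ c : Fin n → Fin k → M,
      (∀ i, (∑ j, c i j) = a i) ∧ (∀ j, (∑ i, c i j) = b j)

section Aux

variable {M : Type*} [AddCommMonoid M]

lemma mapDomain_apply_sum {X Z : Type*} [DecidableEq Z] (h : X → Z) (ρ : X →₀ M) (z : Z) :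
    Finsupp.mapDomain h ρ z = ∑ x ∈ ρ.support, if h x = z then ρ x else 0 := by
  rw [Finsupp.mapDomain, Finsupp.sum_apply]
  simp [Finsupp.single_apply, Finsupp.sum]

lemma mapDomain_apply_fintype {X Z : Type*} [Fintype X] [DecidableEq Z]
    (h : X → Z) (ρ : X →₀ M) (z : Z) :
    Finsupp.mapDomain h ρ z = ∑ x : X, if h x = z then ρ x else 0 := by
  rw [mapDomain_apply_sum]
  refine Finset.sum_subset (Finset.subset_univ _) ?_
  intro x _ hx
  simp [Finsupp.notMem_support_iff.1 hx]

lemma refine_finset (hM : Refinable M) {X Y : Type*}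
    (s : Finset X) (t : Finset Y) (a : X → M) (b : Y → M)
    (hs : s.Nonempty) (ht : t.Nonempty)
    (h : ∑ x ∈ s, a x = ∑ y ∈ t, b y) :
    ∃ c : X → Y → M, (∀ x ∈ s, ∑ y ∈ t, c x y = a x) ∧ (∀ y ∈ t, ∑ x ∈ s, c x y = b y) := by
  classical
  have hsum1 : ∑ i : Fin s.card, a (s.equivFin.symm i) = ∑ x ∈ s, a x := by
    rw [← Finset.sum_coe_sort s a]
    exact (Fintype.sum_equiv s.equivFin _ _ (fun x => by simp)).symm
  have hsum2 : ∑ j : Fin t.card, b (t.equivFin.symm j) = ∑ y ∈ t, b y := by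
    rw [← Finset.sum_coe_sort t b]
    exact (Fintype.sum_equiv t.equivFin _ _ (fun y => by simp)).symm
  obtain ⟨c', hc1, hc2⟩ := hM s.card t.card (Finset.card_pos.2 hs) (Finset.card_pos.2 ht)
      (fun i => a (s.equivFin.symm i)) (fun j => b (t.equivFin.symm j))
      (by rw [hsum1, hsum2, h])
  refine ⟨fun x y => if hx : x ∈ s then if hy : y ∈ t then
      c' (s.equivFin ⟨x, hx⟩) (t.equivFin ⟨y, hy⟩) else 0 else 0, ?_, ?_⟩
  · intro x hx
    rw [← Finset.sum_coe_sort t]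
    calc ∑ y : t, (if hx : x ∈ s then if hy : (y : Y) ∈ t then
            c' (s.equivFin ⟨x, hx⟩) (t.equivFin ⟨y, hy⟩) else 0 else 0)
        = ∑ y : t, c' (s.equivFin ⟨x, hx⟩) (t.equivFin y) := by
          refine Finset.sum_congr rfl fun y _ => by simp [hx, y.2]
      _ = ∑ j : Fin t.card, c' (s.equivFin ⟨x, hx⟩) j :=
          Fintype.sum_equiv t.equivFin _ _ (fun y => rfl)
      _ = a x := by rw [hc1]; simp
  · intro y hy
    rw [← Finset.sum_coe_sort s]
    calc ∑ x : s, (if hx : (x : X) ∈ s then if hy : y ∈ t then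
            c' (s.equivFin ⟨x, hx⟩) (t.equivFin ⟨y, hy⟩) else 0 else 0)
        = ∑ x : s, c' (s.equivFin x) (t.equivFin ⟨y, hy⟩) := by
          refine Finset.sum_congr rfl fun x _ => by simp [hy, x.2]
      _ = ∑ i : Fin s.card, c' i (t.equivFin ⟨y, hy⟩) :=
          Fintype.sum_equiv s.equivFin _ _ (fun x => rfl)
      _ = b y := by rw [hc2]; simp

lemma single_sum_eq {X I : Type*} (x : X) (s : Finset I) (F : I → M) :
    ∑ i ∈ s, Finsupp.single x (F i) = Finsupp.single x (∑ i ∈ s, F i) :=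
  (map_sum (Finsupp.singleAddHom x) F s).symm

lemma insert_sum_eq {X N : Type*} [AddCommMonoid N] [DecidableEq X]
    (x₀ : X) (s : Finset X) (F : X → N) (h : x₀ ∉ s → F x₀ = 0) :
    ∑ x ∈ insert x₀ s, F x = ∑ x ∈ s, F x := by
  by_cases hx : x₀ ∈ s
  · rw [Finset.insert_eq_self.2 hx]
  · rw [Finset.sum_insert hx, h hx, zero_add]

end Aux

/-- The monoid-weighted functor `W_M` preserves surjective weak pullbacks iff `M` is
refinable. -/
theorem refinable_iff_weighted_functor_preserves_surjective_weak_pullbacks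
    (M : Type*) [AddCommMonoid M] :
    Refinable M ↔
      ∀ (X Y Z : Type u) (f : X → Z) (g : Y → Z),
        Function.Surjective f → Function.Surjective g →
        ∀ (μ : X →₀ M) (ν : Y →₀ M),
          Finsupp.mapDomain f μ = Finsupp.mapDomain g ν →
          ∃ ρ : {p : X × Y // f p.1 = g p.2} →₀ M,
            Finsupp.mapDomain (fun p : {p : X × Y // f p.1 = g p.2} => p.1.1) ρ = μ ∧
            Finsupp.mapDomain (fun p : {p : X × Y // f p.1 = g p.2} => p.1.2) ρ = ν := by
  classical
  constructor
  · -- refinable → preservation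
    intro hM X Y Z f g hf hg μ ν hμν
    classical
    set S : Finset Z := μ.support.image f ∪ ν.support.image g with hS
    choose secf hsecf using hf
    choose secg hsecg using hg
    set Af : Z → Finset X := fun z => insert (secf z) (μ.support.filter (fun x => f x = z))
      with hAf
    set Bg : Z → Finset Y := fun z => insert (secg z) (ν.support.filter (fun y => g y = z))
      with hBg
    have hAmem : ∀ z, ∀ x ∈ Af z, f x = z := by
      intro z x hx
      rcases Finset.mem_insert.1 hx with h | h
      · rw [h]; exact hsecf z
      · exact (Finset.mem_filter.1 h).2
    have hBmem : ∀ z, ∀ y ∈ Bg z, g y = z := by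
      intro z y hy
      rcases Finset.mem_insert.1 hy with h | h
      · rw [h]; exact hsecg z
      · exact (Finset.mem_filter.1 h).2
    have hsumA : ∀ z, ∑ x ∈ Af z, μ x = Finsupp.mapDomain f μ z := by
      intro z
      rw [hAf]
      rw [insert_sum_eq _ _ _ (fun hns => by
        by_contra hne
        exact hns (Finset.mem_filter.2 ⟨Finsupp.mem_support_iff.2 hne, hsecf z⟩))]
      rw [mapDomain_apply_sum, Finset.sum_filter]
    have hsumB : ∀ z, ∑ y ∈ Bg z, ν y = Finsupp.mapDomain g ν z := by
      intro z
      rw [hBg]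
      rw [insert_sum_eq _ _ _ (fun hns => by
        by_contra hne
        exact hns (Finset.mem_filter.2 ⟨Finsupp.mem_support_iff.2 hne, hsecg z⟩))]
      rw [mapDomain_apply_sum, Finset.sum_filter]
    have key : ∀ z : Z, ∃ c : X → Y → M,
        (∀ x ∈ Af z, ∑ y ∈ Bg z, c x y = μ x) ∧ (∀ y ∈ Bg z, ∑ x ∈ Af z, c x y = ν y) := by
      intro z
      refine refine_finset hM (Af z) (Bg z) _ _ ⟨_, Finset.mem_insert_self _ _⟩
        ⟨_, Finset.mem_insert_self _ _⟩ ?_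
      rw [hsumA, hsumB, hμν]
    choose c hc1 hc2 using key
    set P := {p : X × Y // f p.1 = g p.2} with hP
    set ρ : P →₀ M := ∑ z ∈ S, ∑ x ∈ (Af z).attach, ∑ y ∈ (Bg z).attach,
        Finsupp.single (⟨(x.1, y.1), by rw [hAmem z x.1 x.2, hBmem z y.1 y.2]⟩ : P)
          (c z x.1 y.1) with hρ
    refine ⟨ρ, ?_, ?_⟩
    · -- first projection
      rw [hρ]
      rw [Finsupp.mapDomain_finset_sum]
      simp only [Finsupp.mapDomain_finset_sum, Finsupp.mapDomain_single]
      have step1 : ∀ z ∈ S, ∑ x ∈ (Af z).attach, ∑ y ∈ (Bg z).attach,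
          Finsupp.single (α := X) x.1 (c z x.1 y.1) = ∑ x ∈ (Af z).attach,
          Finsupp.single (α := X) x.1 (μ x.1) := by
        intro z _
        refine Finset.sum_congr rfl fun x _ => ?_
        rw [single_sum_eq, Finset.sum_attach (Bg z) (fun y => c z x.1 y), hc1 z x.1 x.2]
      rw [Finset.sum_congr rfl step1]
      have step2 : ∀ z ∈ S, ∑ x ∈ (Af z).attach, Finsupp.single (α := X) x.1 (μ x.1)
          = ∑ x ∈ μ.support.filter (fun x => f x = z), Finsupp.single x (μ x) := by
        intro z _
        rw [Finset.sum_attach (Af z) (fun x => Finsupp.single x (μ x))]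
        rw [hAf]
        exact insert_sum_eq _ _ _ (fun hns => by
          by_cases hne : μ (secf z) = 0
          · rw [hne, Finsupp.single_zero]
          · exact absurd (Finset.mem_filter.2
              ⟨Finsupp.mem_support_iff.2 hne, hsecf z⟩) hns)
      rw [Finset.sum_congr rfl step2]
      have hdisj : (S : Set Z).PairwiseDisjoint
          (fun z => μ.support.filter (fun x => f x = z)) := by
        intro z1 _ z2 _ hne
        simp only [Function.onFun, Finset.disjoint_left]
        intro x hx1 hx2
        exact hne ((Finset.mem_filter.1 hx1).2 ▸ (Finset.mem_filter.1 hx2).2.symm ▸ rfl)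
      rw [← Finset.sum_biUnion hdisj]
      have hbi : S.biUnion (fun z => μ.support.filter (fun x => f x = z)) = μ.support := by
        ext x
        simp only [Finset.mem_biUnion, Finset.mem_filter]
        constructor
        · rintro ⟨z, _, hx, _⟩; exact hx
        · intro hx
          exact ⟨f x, Finset.mem_union_left _ (Finset.mem_image_of_mem f hx), hx, rfl⟩
      rw [hbi]
      exact Finsupp.sum_single μ
    · -- second projection
      rw [hρ]
      rw [Finsupp.mapDomain_finset_sum]
      simp only [Finsupp.mapDomain_finset_sum, Finsupp.mapDomain_single]
      have step1 : ∀ z ∈ S, ∑ x ∈ (Af z).attach, ∑ y ∈ (Bg z).attach,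
          Finsupp.single (α := Y) y.1 (c z x.1 y.1) = ∑ y ∈ (Bg z).attach,
          Finsupp.single (α := Y) y.1 (ν y.1) := by
        intro z _
        rw [Finset.sum_comm]
        refine Finset.sum_congr rfl fun y _ => ?_
        rw [single_sum_eq, Finset.sum_attach (Af z) (fun x => c z x y.1), hc2 z y.1 y.2]
      rw [Finset.sum_congr rfl step1]
      have step2 : ∀ z ∈ S, ∑ y ∈ (Bg z).attach, Finsupp.single (α := Y) y.1 (ν y.1)
          = ∑ y ∈ ν.support.filter (fun y => g y = z), Finsupp.single y (ν y) := by
        intro z _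
        rw [Finset.sum_attach (Bg z) (fun y => Finsupp.single y (ν y))]
        rw [hBg]
        exact insert_sum_eq _ _ _ (fun hns => by
          by_cases hne : ν (secg z) = 0
          · rw [hne, Finsupp.single_zero]
          · exact absurd (Finset.mem_filter.2
              ⟨Finsupp.mem_support_iff.2 hne, hsecg z⟩) hns)
      rw [Finset.sum_congr rfl step2]
      have hdisj : (S : Set Z).PairwiseDisjoint
          (fun z => ν.support.filter (fun y => g y = z)) := by
        intro z1 _ z2 _ hne
        simp only [Function.onFun, Finset.disjoint_left]
        intro y hy1 hy2
        exact hne ((Finset.mem_filter.1 hy1).2 ▸ (Finset.mem_filter.1 hy2).2.symm ▸ rfl)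
      rw [← Finset.sum_biUnion hdisj]
      have hbi : S.biUnion (fun z => ν.support.filter (fun y => g y = z)) = ν.support := by
        ext y
        simp only [Finset.mem_biUnion, Finset.mem_filter]
        constructor
        · rintro ⟨z, _, hy, _⟩; exact hy
        · intro hy
          exact ⟨g y, Finset.mem_union_right _ (Finset.mem_image_of_mem g hy), hy, rfl⟩
      rw [hbi]
      exact Finsupp.sum_single ν
  · -- preservation → refinable
    intro h n k hn hk a b hab
    set X := ULift.{u} (Fin n)
    set Y := ULift.{u} (Fin k)
    set f : X → PUnit.{u+1} := fun _ => PUnit.unit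
    set g : Y → PUnit.{u+1} := fun _ => PUnit.unit
    have hf : Function.Surjective f := fun z => ⟨⟨⟨0, hn⟩⟩, rfl⟩
    have hg : Function.Surjective g := fun z => ⟨⟨⟨0, hk⟩⟩, rfl⟩
    set μ : X →₀ M := ∑ i : Fin n, Finsupp.single (ULift.up i) (a i) with hμ
    set ν : Y →₀ M := ∑ j : Fin k, Finsupp.single (ULift.up j) (b j) with hν
    have hmain : Finsupp.mapDomain f μ = Finsupp.mapDomain g ν := by
      rw [hμ, hν, Finsupp.mapDomain_finset_sum, Finsupp.mapDomain_finset_sum]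
      simp only [Finsupp.mapDomain_single]
      rw [single_sum_eq, single_sum_eq, hab]
    obtain ⟨ρ, h1, h2⟩ := h X Y PUnit f g hf hg μ ν hmain
    let e : Fin n × Fin k ≃ {p : X × Y // f p.1 = g p.2} :=
      ⟨fun q => ⟨(⟨q.1⟩, ⟨q.2⟩), rfl⟩, fun p => (p.1.1.down, p.1.2.down),
        fun q => rfl, fun p => rfl⟩
    refine ⟨fun i j => ρ (e (i, j)), ?_, ?_⟩
    · intro i
      have hμi : μ (ULift.up i) = a i := by
        rw [hμ, Finsupp.finset_sum_apply]
        simp [Finsupp.single_apply, ULift.up_injective.eq_iff]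
      have := congrArg (fun m => m (ULift.up i)) h1
      rw [hμi] at this
      rw [← this, mapDomain_apply_fintype,
        ← Equiv.sum_comp e (fun p : {p : X × Y // f p.1 = g p.2} =>
          if p.1.1 = ULift.up i then ρ p else 0),
        Fintype.sum_prod_type_right]
      refine Finset.sum_congr rfl fun j _ => ?_
      have : ∀ i' : Fin n, ((e (i', j)).1.1 = ULift.up i) = (i' = i) := by
        intro i'
        simp [e, ULift.up_injective.eq_iff]
      simp only [this]
      rw [Finset.sum_ite_eq' Finset.univ i (fun i' => ρ (e (i', j)))]
      simp
    · intro j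
      have hνj : ν (ULift.up j) = b j := by
        rw [hν, Finsupp.finset_sum_apply]
        simp [Finsupp.single_apply, ULift.up_injective.eq_iff]
      have := congrArg (fun m => m (ULift.up j)) h2
      rw [hνj] at this
      rw [← this, mapDomain_apply_fintype,
        ← Equiv.sum_comp e (fun p : {p : X × Y // f p.1 = g p.2} =>
          if p.1.2 = ULift.up j then ρ p else 0),
        Fintype.sum_prod_type]
      refine Finset.sum_congr rfl fun i _ => ?_
      have : ∀ j' : Fin k, ((e (i, j')).1.2 = ULift.up j) = (j' = j) := by
        intro j'
        simp [e, ULift.up_injective.eq_iff]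
      simp only [this]
      rw [Finset.sum_ite_eq' Finset.univ j (fun j' => ρ (e (i, j')))]
      simp
end

section
/- For a commutative monoid M the following are equivalent: (i) M is refinable; (ii) W_M maps nonempty binary Cartesian products to weak pullbacks, i.e., for all nonempty types X and Y and all μ : X →₀ M and ν : Y →₀ M whose total sums agree (μ.sum (fun _ m => m) = ν.sum (fun _ m => m)), there exists ρ : X × Y →₀ M with Finsupp.mapDomain Prod.fst ρ = μ and Finsupp.mapDomain Prod.snd ρ = ν. -/
universe u

lemma aux_sum_single {X M : Type*} [AddCommMonoid M] (S : Finset X) (μ : X →₀ M)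
    (h : μ.support ⊆ S) : ∑ x ∈ S, Finsupp.single x (μ x) = μ := by
  rw [← Finsupp.sum_of_support_subset μ h _ (by simp), Finsupp.sum_single]

lemma aux_total {X M : Type*} [AddCommMonoid M] (S : Finset X) (μ : X →₀ M)
    (h : μ.support ⊆ S) : ∑ x ∈ S, μ x = μ.sum (fun _ m => m) := by
  rw [Finsupp.sum_of_support_subset μ h _ (by simp)]

/-- `M` is refinable iff the monoid-weighted functor `W_M` maps nonempty binary Cartesian
products to weak pullbacks. -/
theorem refinable_iff_weighted_functor_weakly_preserves_nonempty_products
    (M : Type*) [AddCommMonoid M] :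
    Refinable M ↔
      ∀ (X Y : Type u), Nonempty X → Nonempty Y →
        ∀ (μ : X →₀ M) (ν : Y →₀ M),
          μ.sum (fun _ m => m) = ν.sum (fun _ m => m) →
          ∃ ρ : X × Y →₀ M,
            Finsupp.mapDomain Prod.fst ρ = μ ∧ Finsupp.mapDomain Prod.snd ρ = ν := by
  classical
  constructor
  · intro hR X Y hX hY μ ν hsum
    obtain ⟨x₀⟩ := hX
    obtain ⟨y₀⟩ := hY
    set S : Finset X := insert x₀ μ.support with hS
    set T : Finset Y := insert y₀ ν.support with hT
    have hSmem : μ.support ⊆ S := Finset.subset_insert _ _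
    have hTmem : ν.support ⊆ T := Finset.subset_insert _ _
    have hn : 1 ≤ S.card := Finset.card_pos.mpr ⟨x₀, Finset.mem_insert_self _ _⟩
    have hk : 1 ≤ T.card := Finset.card_pos.mpr ⟨y₀, Finset.mem_insert_self _ _⟩
    set e := S.equivFin
    set f := T.equivFin
    set a : Fin S.card → M := fun i => μ (e.symm i) with ha
    set b : Fin T.card → M := fun j => ν (f.symm j) with hb
    have hA : (∑ i, a i) = ∑ x ∈ S, μ x := by
      rw [← Finset.sum_attach S (fun x => μ x)]
      exact Equiv.sum_comp e.symm (fun x => μ (x : X))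
    have hB : (∑ j, b j) = ∑ y ∈ T, ν y := by
      rw [← Finset.sum_attach T (fun y => ν y)]
      exact Equiv.sum_comp f.symm (fun y => ν (y : Y))
    have hab : (∑ i, a i) = (∑ j, b j) := by
      rw [hA, hB, aux_total S μ hSmem, aux_total T ν hTmem, hsum]
    obtain ⟨c, hc1, hc2⟩ := hR S.card T.card hn hk a b hab
    refine ⟨∑ i, ∑ j, Finsupp.single ((e.symm i : X), (f.symm j : Y)) (c i j), ?_, ?_⟩
    · rw [Finsupp.mapDomain_finset_sum]
      have : ∀ i, Finsupp.mapDomain Prod.fst (∑ j, Finsupp.single ((e.symm i : X), (f.symm j : Y)) (c i j))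
          = Finsupp.single (e.symm i : X) (a i) := by
        intro i
        rw [Finsupp.mapDomain_finset_sum, ← hc1 i]
        simp [Finsupp.mapDomain_single, Finsupp.single_sum]
        exact (map_sum (Finsupp.singleAddHom (e.symm i : X)) (fun j => c i j) Finset.univ).symm
      rw [Finset.sum_congr rfl (fun i _ => this i)]
      have : (∑ i, Finsupp.single (e.symm i : X) (a i)) = ∑ x ∈ S, Finsupp.single x (μ x) := by
        rw [← Finset.sum_attach S (fun x => Finsupp.single x (μ x))]
        exact Equiv.sum_comp e.symm (fun x => Finsupp.single (x : X) (μ (x : X)))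
      rw [this]
      exact aux_sum_single S μ hSmem
    · rw [Finsupp.mapDomain_finset_sum]
      have : ∀ i, Finsupp.mapDomain Prod.snd (∑ j, Finsupp.single ((e.symm i : X), (f.symm j : Y)) (c i j))
          = ∑ j, Finsupp.single (f.symm j : Y) (c i j) := by
        intro i
        rw [Finsupp.mapDomain_finset_sum]
        simp [Finsupp.mapDomain_single]
      rw [Finset.sum_congr rfl (fun i _ => this i), Finset.sum_comm]
      have : ∀ j, (∑ i, Finsupp.single (f.symm j : Y) (c i j)) = Finsupp.single (f.symm j : Y) (b j) := by
        intro j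
        rw [← hc2 j]
        exact (map_sum (Finsupp.singleAddHom (f.symm j : Y)) (fun i => c i j) Finset.univ).symm
      rw [Finset.sum_congr rfl (fun j _ => this j)]
      have : (∑ j, Finsupp.single (f.symm j : Y) (b j)) = ∑ y ∈ T, Finsupp.single y (ν y) := by
        rw [← Finset.sum_attach T (fun y => Finsupp.single y (ν y))]
        exact Equiv.sum_comp f.symm (fun y => Finsupp.single (y : Y) (ν (y : Y)))
      rw [this]
      exact aux_sum_single T ν hTmem
  · intro h n k hn hk a b hab
    set X := ULift.{u} (Fin n)
    set Y := ULift.{u} (Fin k)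
    have hX : Nonempty X := ⟨⟨⟨0, hn⟩⟩⟩
    have hY : Nonempty Y := ⟨⟨⟨0, hk⟩⟩⟩
    set μ : X →₀ M := ∑ i : Fin n, Finsupp.single (ULift.up i) (a i) with hμ
    set ν : Y →₀ M := ∑ j : Fin k, Finsupp.single (ULift.up j) (b j) with hν
    have hμa : ∀ i : Fin n, μ (ULift.up i) = a i := by
      intro i
      rw [hμ]
      simp [Finsupp.finset_sum_apply, Finsupp.single_apply, ULift.up_injective.eq_iff]
    have hνb : ∀ j : Fin k, ν (ULift.up j) = b j := by
      intro j
      rw [hν]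
      simp [Finsupp.finset_sum_apply, Finsupp.single_apply, ULift.up_injective.eq_iff]
    have hμsum : μ.sum (fun _ m => m) = ∑ i, a i := by
      rw [← aux_total Finset.univ μ (Finset.subset_univ _)]
      rw [← (Equiv.ulift (α := Fin n)).symm.sum_comp (fun x => μ x)]
      exact Finset.sum_congr rfl (fun i _ => hμa i)
    have hνsum : ν.sum (fun _ m => m) = ∑ j, b j := by
      rw [← aux_total Finset.univ ν (Finset.subset_univ _)]
      rw [← (Equiv.ulift (α := Fin k)).symm.sum_comp (fun y => ν y)]
      exact Finset.sum_congr rfl (fun j _ => hνb j)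
    obtain ⟨ρ, hρ1, hρ2⟩ := h X Y hX hY μ ν (by rw [hμsum, hνsum, hab])
    have hrep : ρ = ∑ p : X × Y, Finsupp.single p (ρ p) :=
      (aux_sum_single Finset.univ ρ (Finset.subset_univ _)).symm
    have hfst : ∀ i : Fin n,
        (Finsupp.mapDomain Prod.fst ρ) (ULift.up i) = ∑ j : Fin k, ρ (ULift.up i, ULift.up j) := by
      intro i
      conv_lhs => rw [hrep]
      rw [Finsupp.mapDomain_finset_sum]
      simp only [Finsupp.mapDomain_single]
      rw [Finsupp.finset_sum_apply, Fintype.sum_prod_type]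
      simp only [Finsupp.single_apply]
      rw [Finset.sum_comm]
      rw [Finset.sum_congr rfl fun y _ => by convert Finset.sum_ite_eq' Finset.univ (ULift.up i) (fun x => ρ (x, y))]; simp only [Finset.mem_univ, if_true]
      exact (Equiv.sum_comp Equiv.ulift.symm (fun y => ρ (ULift.up i, y))).symm
    have hsnd : ∀ j : Fin k,
        (Finsupp.mapDomain Prod.snd ρ) (ULift.up j) = ∑ i : Fin n, ρ (ULift.up i, ULift.up j) := by
      intro j
      conv_lhs => rw [hrep]
      rw [Finsupp.mapDomain_finset_sum]
      simp only [Finsupp.mapDomain_single]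
      rw [Finsupp.finset_sum_apply, Fintype.sum_prod_type]
      simp only [Finsupp.single_apply]
      rw [Finset.sum_congr rfl fun x _ => by convert Finset.sum_ite_eq' Finset.univ (ULift.up j) (fun y => ρ (x, y))]; simp only [Finset.mem_univ, if_true]
      exact (Equiv.sum_comp Equiv.ulift.symm (fun x => ρ (x, ULift.up j))).symm
    refine ⟨fun i j => ρ (ULift.up i, ULift.up j), ?_, ?_⟩
    · intro i
      rw [← hμa i, ← hρ1]
      exact (hfst i).symm
    · intro j
      rw [← hνb j, ← hρ2]
      exact (hsnd j).symm
end

section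
/- Let M be a commutative monoid and a, b ∈ M with a + b = 0, a ≠ 0 and b ≠ 0, and let n : ℕ. Suppose λ assigns to each type Y a map λ_Y : (Fin n → Set Y) → Set (Y →₀ M) which is natural (for every f : Y → Y' and A : Fin n → Set Y', λ_Y (fun i => f ⁻¹' (A i)) = (Finsupp.mapDomain f) ⁻¹' (λ_{Y'} A)) and monotone (if A i ⊆ B i for all i then λ_Y A ⊆ λ_Y B). Then for every type X, all x, y : X, and every A : Fin n → Set X one has Finsupp.single x a ∈ λ_X A if and only if Finsupp.single y a ∈ λ_X A; that is, monotone predicate liftings for W_M cannot distinguish the weighted sets a·x and a·y, so W_M has no separating set of monotone predicate liftings when M is not positive. -/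
universe u

/-- If `a + b = 0` with `a, b ≠ 0` in a commutative monoid `M`, then no monotone `n`-ary
predicate lifting for the monoid-weighted functor `W_M` can distinguish the weighted sets
`a·x` and `a·y`. -/
theorem monotone_liftings_cannot_separate_nonpositive
    {M : Type u} [AddCommMonoid M] (a b : M) (hab : a + b = 0)
    (ha : a ≠ 0) (hb : b ≠ 0) (n : ℕ)
    (lam : ∀ Y : Type u, (Fin n → Set Y) → Set (Y →₀ M))
    (hnat : ∀ (Y Y' : Type u) (f : Y → Y') (A : Fin n → Set Y'),
      lam Y (fun i => f ⁻¹' A i) = Finsupp.mapDomain f ⁻¹' lam Y' A)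
    (hmono : ∀ (Y : Type u) (A B : Fin n → Set Y),
      (∀ i, A i ⊆ B i) → lam Y A ⊆ lam Y B)
    (X : Type u) (x y : X) (A : Fin n → Set X) :
    Finsupp.single x a ∈ lam X A ↔ Finsupp.single y a ∈ lam X A := by
  classical
  set K := ULift.{u} (Fin n → Bool) with hK
  let χ : X → K := fun z => ⟨fun i => decide (z ∈ A i)⟩
  let S : Fin n → Set K := fun i => {w : K | w.down i = true}
  have hA : A = fun i => χ ⁻¹' S i := by
    funext i; ext z; simp [χ, S]
  -- key step: membership of `single u a` in `lam K S` is independent of `u`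
  have key : ∀ u v : Fin n → Bool, Finsupp.single (⟨v⟩ : K) a ∈ lam K S →
      Finsupp.single (⟨u⟩ : K) a ∈ lam K S := by
    intro u v hv
    let Y := ULift.{u} (Fin 3)
    let c : Fin n → Bool := fun i => u i && v i
    let f : Y → K := fun z => if z.down = 0 then ⟨u⟩ else ⟨v⟩
    let g : Y → K := fun z => if z.down = 1 then ⟨v⟩ else ⟨c⟩
    let w : Y →₀ M := Finsupp.single ⟨0⟩ a + Finsupp.single ⟨1⟩ a + Finsupp.single ⟨2⟩ b
    have hfw : Finsupp.mapDomain f w = Finsupp.single (⟨u⟩ : K) a := by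
      have h0 : f ⟨0⟩ = ⟨u⟩ := by simp [f]
      have h1 : f ⟨1⟩ = ⟨v⟩ := by simp [f]
      have h2 : f ⟨2⟩ = ⟨v⟩ := by simp [f]
      simp only [w, Finsupp.mapDomain_add, Finsupp.mapDomain_single, h0, h1, h2]
      rw [add_assoc, ← Finsupp.single_add, hab, Finsupp.single_zero, add_zero]
    have hgw : Finsupp.mapDomain g w = Finsupp.single (⟨v⟩ : K) a := by
      have h0 : g ⟨0⟩ = ⟨c⟩ := by simp [g]
      have h1 : g ⟨1⟩ = ⟨v⟩ := by simp [g]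
      have h2 : g ⟨2⟩ = ⟨c⟩ := by simp [g]
      simp only [w, Finsupp.mapDomain_add, Finsupp.mapDomain_single, h0, h1, h2]
      rw [add_right_comm, ← Finsupp.single_add, hab, Finsupp.single_zero, zero_add]
    have hsub : ∀ i, g ⁻¹' S i ⊆ f ⁻¹' S i := by
      intro i z hz
      obtain ⟨z⟩ := z
      fin_cases z
      · simp only [Set.mem_preimage, S, g, Set.mem_setOf_eq] at hz
        simp only [Set.mem_preimage, S, f, Set.mem_setOf_eq]
        simp at hz ⊢
        exact (by simpa [c] using hz : u i = true ∧ v i = true).1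
      · simp only [Set.mem_preimage, S, g, Set.mem_setOf_eq] at hz
        simp only [Set.mem_preimage, S, f, Set.mem_setOf_eq]
        simpa using hz
      · simp only [Set.mem_preimage, S, g, Set.mem_setOf_eq] at hz
        simp only [Set.mem_preimage, S, f, Set.mem_setOf_eq]
        simp at hz ⊢
        exact (by simpa [c] using hz : u i = true ∧ v i = true).2
    have hw1 : w ∈ lam Y (fun i => g ⁻¹' S i) := by
      rw [hnat Y K g S, Set.mem_preimage, hgw]; exact hv
    have hw2 := hmono Y _ _ hsub hw1
    rw [hnat Y K f S, Set.mem_preimage, hfw] at hw2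
    exact hw2
  have hmain : ∀ z : X, (Finsupp.single z a ∈ lam X A ↔
      Finsupp.single (χ z) a ∈ lam K S) := by
    intro z
    conv_lhs => rw [hA]
    rw [hnat X K χ S, Set.mem_preimage, Finsupp.mapDomain_single]
  rw [hmain x, hmain y]
  constructor
  · exact fun h => key _ _ h
  · exact fun h => key _ _ h
end

section
/- Let F : Type u ⥤ Type u be a functor such that F.map f is injective whenever f is injective, and suppose F is finitary: for every type X and every t : F.obj X there exist a finite subset S of X and s : F.obj {x // x ∈ S} with F.map Subtype.val s = t. Then F preserves surjective weak pullbacks if and only if F preserves finite surjective weak pullbacks. -/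
open CategoryTheory

universe u

/-- `F` weakly preserves the pullback of the cospan `(f, g)`. -/
def WeaklyPreservesPullback (F : Type u ⥤ Type u) {X Y Z : Type u}
    (f : X → Z) (g : Y → Z) : Prop :=
  ∀ (s : F.obj X) (t : F.obj Y), F.map (TypeCat.ofHom f) s = F.map (TypeCat.ofHom g) t →
    ∃ w : F.obj {p : X × Y // f p.1 = g p.2},
      F.map (TypeCat.ofHom (fun p : {p : X × Y // f p.1 = g p.2} => p.1.1)) w = s ∧
      F.map (TypeCat.ofHom (fun p : {p : X × Y // f p.1 = g p.2} => p.1.2)) w = t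

/-- A finitary set functor preserving injections preserves surjective weak pullbacks iff it
preserves finite surjective weak pullbacks. -/
theorem finitary_preserves_surjective_weak_pullbacks_iff_finite
    (F : Type u ⥤ Type u)
    (hinj : ∀ {X Y : Type u} (f : X → Y), Function.Injective f →
      Function.Injective (F.map (TypeCat.ofHom f)))
    (hfin : ∀ (X : Type u) (t : F.obj X), ∃ (S : Set X) (_ : S.Finite) (s : F.obj ↥S),
      F.map (TypeCat.ofHom (Subtype.val : ↥S → X)) s = t) :
    (∀ (X Y Z : Type u) (f : X → Z) (g : Y → Z),
        Function.Surjective f → Function.Surjective g →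
        WeaklyPreservesPullback F f g) ↔
    (∀ (X Y Z : Type u) (f : X → Z) (g : Y → Z),
        Finite X → Finite Y → Finite Z →
        Function.Surjective f → Function.Surjective g →
        WeaklyPreservesPullback F f g) := by
  constructor
  · intro h X Y Z f g _ _ _ hf hg
    exact h X Y Z f g hf hg
  · intro h X Y Z f g hf hg s t hst
    obtain ⟨S, hS, s₀, hs₀⟩ := hfin X s
    obtain ⟨T, hT, t₀, ht₀⟩ := hfin Y t
    set σ := Function.surjInv hf with hσdef
    set τ := Function.surjInv hg with hτdef
    set Z₀ : Set Z := f '' S ∪ g '' T with hZ₀def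
    set X₀ : Set X := S ∪ σ '' Z₀ with hX₀def
    set Y₀ : Set Y := T ∪ τ '' Z₀ with hY₀def
    have hZ₀fin : Z₀.Finite := (hS.image f).union (hT.image g)
    have hX₀fin : X₀.Finite := hS.union (hZ₀fin.image σ)
    have hY₀fin : Y₀.Finite := hT.union (hZ₀fin.image τ)
    have hfmem : ∀ x : ↥X₀, f x.val ∈ Z₀ := by
      rintro ⟨x, hx | ⟨z, hz, rfl⟩⟩
      · exact Or.inl ⟨x, hx, rfl⟩
      · simpa [hσdef, Function.surjInv_eq hf] using hz
    have hgmem : ∀ y : ↥Y₀, g y.val ∈ Z₀ := by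
      rintro ⟨y, hy | ⟨z, hz, rfl⟩⟩
      · exact Or.inr ⟨y, hy, rfl⟩
      · simpa [hτdef, Function.surjInv_eq hg] using hz
    let f₀ : ↥X₀ → ↥Z₀ := fun x => ⟨f x.val, hfmem x⟩
    let g₀ : ↥Y₀ → ↥Z₀ := fun y => ⟨g y.val, hgmem y⟩
    have hf₀ : Function.Surjective f₀ := by
      rintro ⟨z, hz⟩
      exact ⟨⟨σ z, Or.inr ⟨z, hz, rfl⟩⟩, Subtype.ext (Function.surjInv_eq hf z)⟩
    have hg₀ : Function.Surjective g₀ := by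
      rintro ⟨z, hz⟩
      exact ⟨⟨τ z, Or.inr ⟨z, hz, rfl⟩⟩, Subtype.ext (Function.surjInv_eq hg z)⟩
    let ιS : ↥S → ↥X₀ := fun x => ⟨x.val, Or.inl x.property⟩
    let ιT : ↥T → ↥Y₀ := fun y => ⟨y.val, Or.inl y.property⟩
    let s₁ := F.map (TypeCat.ofHom ιS) s₀
    let t₁ := F.map (TypeCat.ofHom ιT) t₀
    have hs₁ : F.map (TypeCat.ofHom (Subtype.val : ↥X₀ → X)) s₁ = s := by
      rw [← hs₀, show s₁ = F.map (TypeCat.ofHom ιS) s₀ from rfl, ← FunctorToTypes.map_comp_apply]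
      rfl
    have ht₁ : F.map (TypeCat.ofHom (Subtype.val : ↥Y₀ → Y)) t₁ = t := by
      rw [← ht₀, show t₁ = F.map (TypeCat.ofHom ιT) t₀ from rfl, ← FunctorToTypes.map_comp_apply]
      rfl
    have key : F.map (TypeCat.ofHom f₀) s₁ = F.map (TypeCat.ofHom g₀) t₁ := by
      apply hinj (Subtype.val : ↥Z₀ → Z) Subtype.val_injective
      have h1 : (TypeCat.ofHom f₀ ≫ TypeCat.ofHom (Subtype.val : ↥Z₀ → Z) : ↥X₀ ⟶ Z) = (TypeCat.ofHom (Subtype.val : ↥X₀ → X) ≫ TypeCat.ofHom f) := rfl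
      have h2 : (TypeCat.ofHom g₀ ≫ TypeCat.ofHom (Subtype.val : ↥Z₀ → Z) : ↥Y₀ ⟶ Z) = (TypeCat.ofHom (Subtype.val : ↥Y₀ → Y) ≫ TypeCat.ofHom g) := rfl
      have e1 : F.map (TypeCat.ofHom (Subtype.val : ↥Z₀ → Z)) (F.map (TypeCat.ofHom f₀) s₁) = F.map (TypeCat.ofHom f) s := by
        rw [← FunctorToTypes.map_comp_apply, h1, FunctorToTypes.map_comp_apply, hs₁]
      have e2 : F.map (TypeCat.ofHom (Subtype.val : ↥Z₀ → Z)) (F.map (TypeCat.ofHom g₀) t₁) = F.map (TypeCat.ofHom g) t := by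
        rw [← FunctorToTypes.map_comp_apply, h2, FunctorToTypes.map_comp_apply, ht₁]
      rw [e1, e2, hst]
    have : Finite ↥X₀ := hX₀fin.to_subtype
    have : Finite ↥Y₀ := hY₀fin.to_subtype
    have : Finite ↥Z₀ := hZ₀fin.to_subtype
    obtain ⟨w₀, hw₁, hw₂⟩ :=
      h (↥X₀) (↥Y₀) (↥Z₀) f₀ g₀ ‹_› ‹_› ‹_› hf₀ hg₀ s₁ t₁ key
    let ι : {p : ↥X₀ × ↥Y₀ // f₀ p.1 = g₀ p.2} → {p : X × Y // f p.1 = g p.2} :=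
      fun p => ⟨(p.1.1.val, p.1.2.val), congrArg Subtype.val p.2⟩
    refine ⟨F.map (TypeCat.ofHom ι) w₀, ?_, ?_⟩
    · have hc : (TypeCat.ofHom ι ≫ TypeCat.ofHom fun p : {p : X × Y // f p.1 = g p.2} => p.1.1 :
            {p : ↥X₀ × ↥Y₀ // f₀ p.1 = g₀ p.2} ⟶ X)
          = (TypeCat.ofHom (fun p : {p : ↥X₀ × ↥Y₀ // f₀ p.1 = g₀ p.2} => p.1.1) ≫
            TypeCat.ofHom (Subtype.val : ↥X₀ → X)) := rfl
      rw [← FunctorToTypes.map_comp_apply, hc, FunctorToTypes.map_comp_apply, hw₁, hs₁]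
    · have hc : (TypeCat.ofHom ι ≫ TypeCat.ofHom fun p : {p : X × Y // f p.1 = g p.2} => p.1.2 :
            {p : ↥X₀ × ↥Y₀ // f₀ p.1 = g₀ p.2} ⟶ Y)
          = (TypeCat.ofHom (fun p : {p : ↥X₀ × ↥Y₀ // f₀ p.1 = g₀ p.2} => p.1.2) ≫
            TypeCat.ofHom (Subtype.val : ↥Y₀ → Y)) := rfl
      rw [← FunctorToTypes.map_comp_apply, hc, FunctorToTypes.map_comp_apply, hw₂, ht₁]
end

section
/- Let u := ![true, true, false] and v := ![false, true, true] : Fin 3 → Bool; each of u and v takes at most 2 distinct values. There is no w : Fin 3 → Bool × Bool whose range has at most 2 elements such that (w i).1 = u i and (w i).2 = v i for all i : Fin 3. Consequently, the functor F³₂, defined on a type X by F³₂ X := {v : Fin 3 → X | the range of v has at most 2 elements} and acting on functions componentwise, does not weakly preserve the surjective pullback of the constant map f : Bool → PUnit along itself, and hence does not preserve finite surjective weak pullbacks. -/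
/-- The functor `F³₂` on objects: triples taking at most two distinct values. -/
def F32obj (X : Type*) : Set (Fin 3 → X) := {v | (Set.range v).ncard ≤ 2}

lemma F32_key : ¬ ∃ w : Fin 3 → Bool × Bool, w ∈ F32obj (Bool × Bool) ∧
        (∀ i, (w i).1 = ![true, true, false] i) ∧
        (∀ i, (w i).2 = ![false, true, true] i) := by
  rintro ⟨w, hw, h1, h2⟩
  have a0 := h1 0; have a1 := h1 1; have a2 := h1 2
  have b0 := h2 0; have b1 := h2 1; have b2 := h2 2
  simp at a0 a1 a2 b0 b1 b2
  have hweq : w = ![(true, false), (true, true), (false, true)] := by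
    funext i
    fin_cases i <;> simp <;> [exact Prod.ext a0 b0; exact Prod.ext a1 b1; exact Prod.ext a2 b2]
  rw [hweq] at hw
  have h0 : Set.range ![(true, false), (true, true), (false, true)] =
      {(true, false), (true, true), (false, true)} := by
    ext x
    simp [Matrix.range_cons]
    tauto
  unfold F32obj at hw
  rw [Set.mem_setOf_eq, h0] at hw
  have h3 : ({(true, false), (true, true), (false, true)} : Set (Bool × Bool)).ncard = 3 := by
    rw [Set.ncard_insert_of_notMem (by simp), Set.ncard_pair (by simp)]
  omega

lemma F32_bool (v : Fin 3 → Bool) : v ∈ F32obj Bool := by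
  unfold F32obj
  rw [Set.mem_setOf_eq]
  calc (Set.range v).ncard ≤ (Set.univ : Set Bool).ncard :=
        Set.ncard_le_ncard (Set.subset_univ _) Set.finite_univ
    _ = 2 := by rw [Set.ncard_univ]; simp [Nat.card_eq_fintype_card]

/-- `u = (⊤,⊤,⊥)` and `v = (⊥,⊤,⊤)` each take at most two values and have equal image under
the constant map `Bool → PUnit`, but there is no element of `F³₂` of the pullback projecting
to both; hence `F³₂` does not preserve finite surjective weak pullbacks. -/
theorem F32_not_preserve_finite_surjective_weak_pullbacks :
    (¬ ∃ w : Fin 3 → Bool × Bool, w ∈ F32obj (Bool × Bool) ∧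
        (∀ i, (w i).1 = ![true, true, false] i) ∧
        (∀ i, (w i).2 = ![false, true, true] i)) ∧
    (let f : Bool → PUnit := fun _ => PUnit.unit
     Function.Surjective f ∧
     ![true, true, false] ∈ F32obj Bool ∧
     ![false, true, true] ∈ F32obj Bool ∧
     (∀ i, f (![true, true, false] i) = f (![false, true, true] i)) ∧
     ¬ ∃ w : Fin 3 → {p : Bool × Bool // f p.1 = f p.2},
        w ∈ F32obj {p : Bool × Bool // f p.1 = f p.2} ∧
        (∀ i, ((fun p : {p : Bool × Bool // f p.1 = f p.2} => p.1.1) ∘ w) i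
            = ![true, true, false] i) ∧
        (∀ i, ((fun p : {p : Bool × Bool // f p.1 = f p.2} => p.1.2) ∘ w) i
            = ![false, true, true] i)) := by
  refine ⟨F32_key, ?_⟩
  intro f
  refine ⟨fun u => ⟨true, rfl⟩, F32_bool _, F32_bool _, fun i => rfl, ?_⟩
  rintro ⟨w, hw, h1, h2⟩
  apply F32_key
  refine ⟨fun i => (w i).1, ?_, h1, h2⟩
  unfold F32obj at hw ⊢
  rw [Set.mem_setOf_eq] at hw ⊢
  have : Set.range (fun i => (w i).1) = Subtype.val '' Set.range w := by
    rw [← Set.range_comp]; rfl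
  rw [this]
  exact le_trans (Set.ncard_image_le (Set.finite_range w)) hw
end

section
/- Let F, Λ, ar, ⟦·⟧ be a set functor with a modal signature interpreted by predicate liftings, let X be a type and 𝔄 a finite Boolean subalgebra of Set X. Then a one-step formula φ ∈ Prop(Λ(𝔄)) is one-step satisfiable over X (via the inclusion valuation) if and only if φcan_𝔄 is one-step satisfiable over S(𝔄); likewise, F X ⊨ φ if and only if F S(𝔄) ⊨ φcan_𝔄. -/
open CategoryTheory

universe u v

/-- Propositional formulas over a type `Z` of atoms. -/
inductive PropForm (Z : Type v) : Type v
  | bot : PropForm Z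
  | atom : Z → PropForm Z
  | neg : PropForm Z → PropForm Z
  | and : PropForm Z → PropForm Z → PropForm Z

/-- Extension of a propositional formula under a valuation of atoms by subsets of `X`. -/
def PropForm.eval {Z : Type v} {X : Type u} (τ : Z → Set X) : PropForm Z → Set X
  | .bot => ∅
  | .atom z => τ z
  | .neg φ => (PropForm.eval τ φ)ᶜ
  | .and φ ψ => PropForm.eval τ φ ∩ PropForm.eval τ ψ

/-- Substitution of atoms in a propositional formula. -/
def PropForm.map {Z : Type v} {W : Type _} (f : Z → W) : PropForm Z → PropForm W
  | .bot => .bot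
  | .atom z => .atom (f z)
  | .neg φ => .neg (PropForm.map f φ)
  | .and φ ψ => .and (PropForm.map f φ) (PropForm.map f ψ)

/-- A finite modal signature for `F`, interpreted by predicate liftings: a finite type of
modalities with arities, each interpreted by a natural predicate lifting. -/
structure ModalSig (F : Type u ⥤ Type u) where
  Λ : Type
  finite : Finite Λ
  ar : Λ → ℕ
  lift : ∀ (m : Λ) (X : Type u), (Fin (ar m) → Set X) → Set (F.obj X)
  natural : ∀ (m : Λ) (X Y : Type u) (f : X → Y) (A : Fin (ar m) → Set Y),
    lift m X (fun i => f ⁻¹' A i) = F.map (TypeCat.ofHom f) ⁻¹' lift m Y A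

/-- `Prop(Λ(Z))`: propositional combinations of modal atoms `♥(z₁,…,z_{ar ♥})` over `Z`. -/
def OSF {F : Type u ⥤ Type u} (S : ModalSig F) (Z : Type v) : Type v :=
  PropForm ((m : S.Λ) × (Fin (S.ar m) → Z))

/-- Extension of a formula in `Prop(Λ(Z))` in `Set (F.obj X)`, given a valuation
`τ : Z → Set X`. -/
def OSF.ext {F : Type u ⥤ Type u} (S : ModalSig F) {Z : Type v} {X : Type u}
    (τ : Z → Set X) (φ : OSF S Z) : Set (F.obj X) :=
  PropForm.eval (fun a => S.lift a.1 X (fun i => τ (a.2 i))) φ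

/-- Substitution of the arguments of modalities in a formula in `Prop(Λ(Z))`. -/
def OSF.map {F : Type u ⥤ Type u} (S : ModalSig F) {Z W : Type _} (f : Z → W) :
    OSF S Z → OSF S W :=
  PropForm.map (fun a => ⟨a.1, fun i => f (a.2 i)⟩)

/-- A Boolean subalgebra of `Set X`. -/
def IsBoolSubalg {X : Type u} (𝔄 : Set (Set X)) : Prop :=
  ∅ ∈ 𝔄 ∧ Set.univ ∈ 𝔄 ∧ (∀ A ∈ 𝔄, Aᶜ ∈ 𝔄) ∧ (∀ A ∈ 𝔄, ∀ B ∈ 𝔄, A ∪ B ∈ 𝔄) ∧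
    (∀ A ∈ 𝔄, ∀ B ∈ 𝔄, A ∩ B ∈ 𝔄)

/-- The atoms `S(𝔄)` of a (finite) Boolean subalgebra: its minimal nonempty elements. -/
def SAtoms {X : Type u} (𝔄 : Set (Set X)) : Set (Set X) :=
  {U | U ∈ 𝔄 ∧ U ≠ ∅ ∧ ∀ B ∈ 𝔄, B ≠ ∅ → B ⊆ U → B = U}

/-- The canonical isomorphism `can_𝔄`, sending `A` to the set of atoms contained in it. -/
def canOf {X : Type u} (𝔄 : Set (Set X)) (A : Set X) : Set ↥(SAtoms 𝔄) :=
  {U | (U : Set X) ⊆ A}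

section Aux

variable {X : Type u} {𝔄 : Set (Set X)}

lemma eval_preimage {Z : Type v} {X Y : Type*} (f : X → Y) (τ : Z → Set Y)
    (φ : PropForm Z) :
    PropForm.eval (fun z => f ⁻¹' τ z) φ = f ⁻¹' PropForm.eval τ φ := by
  induction φ with
  | bot => simp [PropForm.eval]
  | atom z => rfl
  | neg φ ih => simp [PropForm.eval, ih]
  | and φ ψ ih1 ih2 => simp [PropForm.eval, ih1, ih2]

lemma eval_propmap {Z W : Type*} {X : Type*} (f : Z → W) (τ : W → Set X)
    (φ : PropForm Z) :
    PropForm.eval τ (PropForm.map f φ) = PropForm.eval (fun z => τ (f z)) φ := by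
  induction φ with
  | bot => rfl
  | atom z => rfl
  | neg φ ih => simp [PropForm.eval, PropForm.map, ih]
  | and φ ψ ih1 ih2 => simp [PropForm.eval, PropForm.map, ih1, ih2]

lemma sInter_mem (halg : IsBoolSubalg 𝔄) {s : Set (Set X)} (hs : s.Finite)
    (hsub : s ⊆ 𝔄) : ⋂₀ s ∈ 𝔄 := by
  refine Set.Finite.induction_on (motive := fun s _ => s ⊆ 𝔄 → ⋂₀ s ∈ 𝔄) s hs ?_ ?_ hsub
  · intro _
    simpa using halg.2.1
  · intro A t _ _ ih hsub'
    rw [Set.sInter_insert]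
    exact halg.2.2.2.2 _ (hsub' (Set.mem_insert _ _)) _
      (ih fun B hB => hsub' (Set.mem_insert_of_mem _ hB))

/-- The smallest element of `𝔄` containing `x`. -/
def atomOf (𝔄 : Set (Set X)) (x : X) : Set X := ⋂₀ {B | B ∈ 𝔄 ∧ x ∈ B}

lemma mem_atomOf (x : X) : x ∈ atomOf 𝔄 x := fun _ hB => hB.2

lemma atomOf_subset {x : X} {A : Set X} (hA : A ∈ 𝔄) (hx : x ∈ A) :
    atomOf 𝔄 x ⊆ A := Set.sInter_subset_of_mem ⟨hA, hx⟩

lemma atomOf_mem (halg : IsBoolSubalg 𝔄) (hfin : 𝔄.Finite) (x : X) :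
    atomOf 𝔄 x ∈ 𝔄 :=
  sInter_mem halg (hfin.subset (fun _ h => h.1)) (fun _ h => h.1)

lemma atomOf_mem_SAtoms (halg : IsBoolSubalg 𝔄) (hfin : 𝔄.Finite) (x : X) :
    atomOf 𝔄 x ∈ SAtoms 𝔄 := by
  refine ⟨atomOf_mem halg hfin x, ?_, ?_⟩
  · exact fun h => (h ▸ mem_atomOf x : x ∈ (∅ : Set X))
  · intro B hB hBne hBsub
    by_cases hxB : x ∈ B
    · exact subset_antisymm hBsub (atomOf_subset hB hxB)
    · exfalso
      apply hBne
      have h1 : atomOf 𝔄 x ⊆ Bᶜ := atomOf_subset (halg.2.2.1 _ hB) hxB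
      have : B ⊆ Bᶜ := hBsub.trans h1
      ext y; simp only [Set.mem_empty_iff_false, iff_false]
      exact fun hy => this hy hy

/-- The map sending `x` to its atom. -/
noncomputable def gMap (halg : IsBoolSubalg 𝔄) (hfin : 𝔄.Finite) :
    X → ↥(SAtoms 𝔄) := fun x => ⟨atomOf 𝔄 x, atomOf_mem_SAtoms halg hfin x⟩

lemma gMap_preimage (halg : IsBoolSubalg 𝔄) (hfin : 𝔄.Finite) (A : ↥𝔄) :
    gMap halg hfin ⁻¹' canOf 𝔄 (A : Set X) = (A : Set X) := by
  ext x
  simp only [Set.mem_preimage, canOf, gMap, Set.mem_setOf_eq]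
  exact ⟨fun h => h (mem_atomOf x), fun h => atomOf_subset A.2 h⟩

lemma gMap_surjective (halg : IsBoolSubalg 𝔄) (hfin : 𝔄.Finite) :
    Function.Surjective (gMap halg hfin) := by
  rintro ⟨U, hU𝔄, hUne, hUmin⟩
  obtain ⟨x, hx⟩ := Set.nonempty_iff_ne_empty.2 hUne
  refine ⟨x, Subtype.ext ?_⟩
  exact hUmin _ (atomOf_mem halg hfin x)
    (fun h => (h ▸ mem_atomOf x : x ∈ (∅ : Set X)))
    (atomOf_subset hU𝔄 hx)

end Aux

/-- A formula `φ ∈ Prop(Λ(𝔄))` is one-step satisfiable over `X` (via the inclusion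
valuation) iff `φ can_𝔄` is one-step satisfiable over `S(𝔄)`; likewise `F X ⊨ φ` iff
`F S(𝔄) ⊨ φ can_𝔄`. -/
theorem can_satisfiable_and_valid {F : Type u ⥤ Type u} (S : ModalSig F)
    (X : Type u) (𝔄 : Set (Set X)) (halg : IsBoolSubalg 𝔄) (hfin : 𝔄.Finite)
    (φ : OSF S ↥𝔄) :
    (OSF.ext S (Subtype.val : ↥𝔄 → Set X) φ ≠ ∅ ↔
      OSF.ext S (id : Set ↥(SAtoms 𝔄) → Set ↥(SAtoms 𝔄))
        (OSF.map S (fun A : ↥𝔄 => canOf 𝔄 ↑A) φ) ≠ ∅) ∧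
    (OSF.ext S (Subtype.val : ↥𝔄 → Set X) φ = Set.univ ↔
      OSF.ext S (id : Set ↥(SAtoms 𝔄) → Set ↥(SAtoms 𝔄))
        (OSF.map S (fun A : ↥𝔄 => canOf 𝔄 ↑A) φ) = Set.univ) := by
    classical
  set g : X → ↥(SAtoms 𝔄) := gMap halg hfin with hg
  have hgs : Function.Surjective g := gMap_surjective halg hfin
  -- F.map g is surjective
  have hFg : Function.Surjective (F.map (TypeCat.ofHom g)) := by
    intro t
    refine ⟨F.map (TypeCat.ofHom (Function.surjInv hgs)) t, ?_⟩
    have h1 : TypeCat.ofHom (Function.surjInv hgs) ≫ TypeCat.ofHom g = 𝟙 ↥(SAtoms 𝔄) := by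
      exact ConcreteCategory.hom_ext _ _ fun u => Function.surjInv_eq hgs u
    have h2 : F.map (TypeCat.ofHom (Function.surjInv hgs)) ≫ F.map (TypeCat.ofHom g) = 𝟙 (F.obj ↥(SAtoms 𝔄)) := by
      rw [← F.map_comp, h1, F.map_id]
    exact congrArg (fun h => h t) h2
  -- the key extension identity
  have key : OSF.ext S (Subtype.val : ↥𝔄 → Set X) φ =
      F.map (TypeCat.ofHom g) ⁻¹' OSF.ext S (id : Set ↥(SAtoms 𝔄) → Set ↥(SAtoms 𝔄))
        (OSF.map S (fun A : ↥𝔄 => canOf 𝔄 ↑A) φ) := by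
    have hval : (fun a : (m : S.Λ) × (Fin (S.ar m) → ↥𝔄) =>
        S.lift a.1 X (fun i => ((a.2 i : Set X)))) =
        (fun a : (m : S.Λ) × (Fin (S.ar m) → ↥𝔄) =>
          F.map (TypeCat.ofHom g) ⁻¹' S.lift a.1 ↥(SAtoms 𝔄) (fun i => canOf 𝔄 (a.2 i))) := by
      funext a
      have h3 : (fun i => ((a.2 i : Set X))) =
          (fun i => g ⁻¹' canOf 𝔄 ((a.2 i : Set X))) :=
        funext fun i => (gMap_preimage halg hfin (a.2 i)).symm
      rw [h3]
      exact S.natural a.1 X ↥(SAtoms 𝔄) g (fun i => canOf 𝔄 (a.2 i))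
    unfold OSF.ext OSF.map
    erw [eval_propmap]
    simp only [id_eq]
    rw [hval]
    exact eval_preimage _ _ _
  rw [key]
  constructor
  · simp only [← Set.nonempty_iff_ne_empty]
    exact ⟨fun ⟨t, ht⟩ => ⟨_, ht⟩, fun h => h.preimage hFg⟩
  · rw [Set.preimage_eq_univ_iff, hFg.range_eq, Set.univ_subset_iff]
end

section
/- Let F, Λ, ar, ⟦·⟧ be a set functor with a modal signature interpreted by predicate liftings, let f : X → Y be surjective, let 𝔄 be the Boolean subalgebra of Set X consisting of the f-invariant sets (A with f ⁻¹' (f '' A) = A), and let φ ∈ Prop(Λ(𝔄)). Let φσ_f be the one-step formula over subsets of Y obtained by replacing each atom A of φ by f '' A. Then F X ⊨ φ if and only if F Y ⊨ φσ_f. -/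
open CategoryTheory

universe u v

/-- Invariance lemma: for surjective `f : X → Y`, `𝔄` the subalgebra of `f`-invariant sets,
and `φ ∈ Prop(Λ(𝔄))`: `F X ⊨ φ` iff `F Y ⊨ φ σ_f`, where `φ σ_f` replaces each atom `A`
by `f '' A` (and is interpreted via the inclusion valuation over `Y`). -/
theorem invariance_lemma {F : Type u ⥤ Type u} (S : ModalSig F)
    {X Y : Type u} (f : X → Y) (hf : Function.Surjective f)
    (φ : OSF S {A : Set X // f ⁻¹' (f '' A) = A}) :
    OSF.ext S (fun A : {A : Set X // f ⁻¹' (f '' A) = A} => (A : Set X)) φ = Set.univ ↔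
    OSF.ext S (id : Set Y → Set Y)
      (OSF.map S (fun A : {A : Set X // f ⁻¹' (f '' A) = A} => f '' (A : Set X)) φ)
      = Set.univ := by
  have key : OSF.ext S (fun A : {A : Set X // f ⁻¹' (f '' A) = A} => (A : Set X)) φ =
      F.map (TypeCat.ofHom f) ⁻¹' OSF.ext S (id : Set Y → Set Y)
        (OSF.map S (fun A : {A : Set X // f ⁻¹' (f '' A) = A} => f '' (A : Set X)) φ) := by
    induction φ with
    | bot => rfl
    | atom a =>
        show S.lift a.1 X (fun i => ((a.2 i : Set X))) = _
        have : (fun i => ((a.2 i : Set X))) = fun i => f ⁻¹' (f '' (a.2 i : Set X)) := by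
          funext i; exact ((a.2 i).2).symm
        rw [this, S.natural]
        rfl
    | neg ψ ih =>
        simp only [OSF.ext, OSF.map, PropForm.map, PropForm.eval] at *
        rw [ih, Set.preimage_compl]
    | and ψ χ ih1 ih2 =>
        simp only [OSF.ext, OSF.map, PropForm.map, PropForm.eval] at *
        rw [ih1, ih2, Set.preimage_inter]
  rw [key]
  have hsurj : Function.Surjective (F.map (TypeCat.ofHom f)) := by
    obtain ⟨g, hg⟩ := hf.hasRightInverse
    intro y
    refine ⟨F.map (TypeCat.ofHom g) y, ?_⟩
    have : F.map (TypeCat.ofHom g) ≫ F.map (TypeCat.ofHom f) = 𝟙 (F.obj Y) := by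
      rw [← F.map_comp, ← F.map_id]
      congr 1
      ext x
      exact hg x
    exact ConcreteCategory.congr_hom this y
  constructor
  · intro h
    ext y
    simp only [Set.mem_univ, iff_true]
    obtain ⟨x, rfl⟩ := hsurj y
    have := h ▸ Set.mem_univ x
    exact (Set.eq_univ_iff_forall.mp h x : _)
  · intro h; rw [h, Set.preimage_univ]
end

section
/- Let F, Λ, ar, ⟦·⟧ be a set functor with a finite modal signature interpreted by predicate liftings. The logic L(Λ) has uniform one-step interpolation if and only if it has one-step interpolation. -/
open CategoryTheory

universe u v

/-- Interpolable pairs of Boolean subalgebras. -/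
def Interpolable {X : Type u} (𝔄₁ 𝔄₂ : Set (Set X)) : Prop :=
  ∀ A ∈ 𝔄₁, ∀ B ∈ 𝔄₂, A ⊆ B → ∃ C ∈ 𝔄₁ ∩ 𝔄₂, A ⊆ C ∧ C ⊆ B

/-- The logic `L(Λ)` has one-step interpolation: for interpolable finite Boolean
subalgebras `𝔄₁, 𝔄₂` and `φ ∈ Prop(Λ(𝔄₁))`, `ψ ∈ Prop(Λ(𝔄₂))` with `F X ⊨ φ → ψ`,
there is an interpolant `ρ ∈ Prop(Λ(𝔄₁ ∩ 𝔄₂))`. -/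
def OneStepInterpolation {F : Type u ⥤ Type u} (S : ModalSig F) : Prop :=
  ∀ (X : Type u) (𝔄₁ 𝔄₂ : Set (Set X)),
    IsBoolSubalg 𝔄₁ → IsBoolSubalg 𝔄₂ → 𝔄₁.Finite → 𝔄₂.Finite → Interpolable 𝔄₁ 𝔄₂ →
    ∀ (φ : OSF S ↥𝔄₁) (ψ : OSF S ↥𝔄₂),
      OSF.ext S (Subtype.val : ↥𝔄₁ → Set X) φ ⊆ OSF.ext S (Subtype.val : ↥𝔄₂ → Set X) ψ →
      ∃ ρ : OSF S ↥(𝔄₁ ∩ 𝔄₂),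
        OSF.ext S (Subtype.val : ↥𝔄₁ → Set X) φ
          ⊆ OSF.ext S (Subtype.val : ↥(𝔄₁ ∩ 𝔄₂) → Set X) ρ ∧
        OSF.ext S (Subtype.val : ↥(𝔄₁ ∩ 𝔄₂) → Set X) ρ
          ⊆ OSF.ext S (Subtype.val : ↥𝔄₂ → Set X) ψ

/-- The logic `L(Λ)` has uniform one-step interpolation: for finite Boolean subalgebras
`𝔄₀ ⊆ 𝔄₁` and `φ ∈ Prop(Λ(𝔄₁))` there is a single `ρ ∈ Prop(Λ(𝔄₀))` with `F X ⊨ φ → ρ`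
interpolating for every `ψ` over an `𝔄₂` interpolable with `𝔄₁` with `𝔄₁ ∩ 𝔄₂ ⊆ 𝔄₀`. -/
def UniformOneStepInterpolation {F : Type u ⥤ Type u} (S : ModalSig F) : Prop :=
  ∀ (X : Type u) (𝔄₀ 𝔄₁ : Set (Set X)),
    IsBoolSubalg 𝔄₀ → IsBoolSubalg 𝔄₁ → 𝔄₀.Finite → 𝔄₁.Finite → 𝔄₀ ⊆ 𝔄₁ →
    ∀ φ : OSF S ↥𝔄₁, ∃ ρ : OSF S ↥𝔄₀,
      OSF.ext S (Subtype.val : ↥𝔄₁ → Set X) φ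
        ⊆ OSF.ext S (Subtype.val : ↥𝔄₀ → Set X) ρ ∧
      ∀ 𝔄₂ : Set (Set X), IsBoolSubalg 𝔄₂ → 𝔄₂.Finite → Interpolable 𝔄₁ 𝔄₂ →
        𝔄₁ ∩ 𝔄₂ ⊆ 𝔄₀ →
        ∀ ψ : OSF S ↥𝔄₂,
          OSF.ext S (Subtype.val : ↥𝔄₁ → Set X) φ
            ⊆ OSF.ext S (Subtype.val : ↥𝔄₂ → Set X) ψ →
          OSF.ext S (Subtype.val : ↥𝔄₀ → Set X) ρ
            ⊆ OSF.ext S (Subtype.val : ↥𝔄₂ → Set X) ψ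

/-- Truth function of a propositional formula. -/
def PropForm.tf {Z : Type v} : PropForm Z → (Z → Prop) → Prop
  | .bot, _ => False
  | .atom z, v => v z
  | .neg φ, v => ¬ PropForm.tf φ v
  | .and φ ψ, v => PropForm.tf φ v ∧ PropForm.tf ψ v

lemma PropForm.mem_eval_iff {Z : Type v} {X : Type u} (τ : Z → Set X) (χ : PropForm Z)
    (x : X) : x ∈ PropForm.eval τ χ ↔ PropForm.tf χ (fun z => x ∈ τ z) := by
  induction χ with
  | bot => simp [PropForm.eval, PropForm.tf]
  | atom z => simp [PropForm.eval, PropForm.tf]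
  | neg φ ih => simp [PropForm.eval, PropForm.tf, ih]
  | and φ ψ ih1 ih2 => simp [PropForm.eval, PropForm.tf, ih1, ih2]

lemma PropForm.eval_eq_of_tf_eq {Z : Type v} {X : Type u} (τ : Z → Set X)
    {χ₁ χ₂ : PropForm Z} (h : PropForm.tf χ₁ = PropForm.tf χ₂) :
    PropForm.eval τ χ₁ = PropForm.eval τ χ₂ := by
  ext x; rw [PropForm.mem_eval_iff, PropForm.mem_eval_iff, h]

lemma PropForm.eval_map {Z : Type v} {W : Type _} {X : Type u} (f : Z → W)
    (τ : W → Set X) (χ : PropForm Z) :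
    PropForm.eval τ (PropForm.map f χ) = PropForm.eval (fun z => τ (f z)) χ := by
  induction χ with
  | bot => rfl
  | atom z => rfl
  | neg φ ih => simp [PropForm.map, PropForm.eval, ih]
  | and φ ψ ih1 ih2 => simp [PropForm.map, PropForm.eval, ih1, ih2]

/-- Finite conjunction of propositional formulas. -/
def PropForm.bigAnd {Z : Type v} : List (PropForm Z) → PropForm Z
  | [] => .neg .bot
  | a :: l => .and a (PropForm.bigAnd l)

lemma PropForm.mem_eval_bigAnd {Z : Type v} {X : Type u} (τ : Z → Set X)
    (l : List (PropForm Z)) (x : X) :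
    x ∈ PropForm.eval τ (PropForm.bigAnd l) ↔ ∀ χ ∈ l, x ∈ PropForm.eval τ χ := by
  induction l with
  | nil => simp [PropForm.bigAnd, PropForm.eval]
  | cons a l ih => simp [PropForm.bigAnd, PropForm.eval, ih]

lemma OSF.ext_map {F : Type u ⥤ Type u} (S : ModalSig F) {Z W : Type _} {X : Type u}
    (f : Z → W) (τ : W → Set X) (χ : OSF S Z) :
    OSF.ext S τ (OSF.map S f χ) = OSF.ext S (fun z => τ (f z)) χ := by
  unfold OSF.ext OSF.map
  exact PropForm.eval_map _ _ χ

lemma IsBoolSubalg.inter {X : Type u} {𝔄₁ 𝔄₂ : Set (Set X)}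
    (h1 : IsBoolSubalg 𝔄₁) (h2 : IsBoolSubalg 𝔄₂) : IsBoolSubalg (𝔄₁ ∩ 𝔄₂) := by
  obtain ⟨e1, u1, c1, o1, i1⟩ := h1
  obtain ⟨e2, u2, c2, o2, i2⟩ := h2
  exact ⟨⟨e1, e2⟩, ⟨u1, u2⟩,
    fun A hA => ⟨c1 A hA.1, c2 A hA.2⟩,
    fun A hA B hB => ⟨o1 A hA.1 B hB.1, o2 A hA.2 B hB.2⟩,
    fun A hA B hB => ⟨i1 A hA.1 B hB.1, i2 A hA.2 B hB.2⟩⟩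

/-- For a finite modal signature, uniform one-step interpolation is equivalent to
one-step interpolation. -/
theorem uniform_one_step_interpolation_iff {F : Type u ⥤ Type u} (S : ModalSig F) :
    UniformOneStepInterpolation S ↔ OneStepInterpolation S := by
  constructor
  · intro hU X 𝔄₁ 𝔄₂ h1 h2 hf1 hf2 hint φ ψ himp
    obtain ⟨ρ, hρ1, hρ2⟩ := hU X (𝔄₁ ∩ 𝔄₂) 𝔄₁ (h1.inter h2) h1
      (hf1.subset Set.inter_subset_left) hf1 Set.inter_subset_left φ
    exact ⟨ρ, hρ1, hρ2 𝔄₂ h2 hf2 hint subset_rfl ψ himp⟩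
  · intro hO X 𝔄₀ 𝔄₁ h0 h1 hf0 hf1 hsub φ
    classical
    have hΛ : Finite S.Λ := S.finite
    have h𝔄₀ : Finite ↥𝔄₀ := hf0.to_subtype
    let Atom := (m : S.Λ) × (Fin (S.ar m) → ↥𝔄₀)
    have hAtom : Finite Atom := inferInstance
    let σ : Atom → Set (F.obj X) := fun a => S.lift a.1 X (fun i => ((a.2 i) : Set X))
    let E : Set (F.obj X) := OSF.ext S (Subtype.val : ↥𝔄₁ → Set X) φ
    let T : Set (PropForm Atom) := {χ | E ⊆ PropForm.eval σ χ}
    have hGfin : (PropForm.tf '' T).Finite := Set.toFinite _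
    let g : ((Atom → Prop) → Prop) → PropForm Atom := fun t =>
      if h : t ∈ PropForm.tf '' T then h.choose else .bot
    have hg1 : ∀ t ∈ PropForm.tf '' T, g t ∈ T := by
      intro t ht
      simp only [g, dif_pos ht]
      exact ht.choose_spec.1
    have hg2 : ∀ t ∈ PropForm.tf '' T, PropForm.tf (g t) = t := by
      intro t ht
      simp only [g, dif_pos ht]
      exact ht.choose_spec.2
    let L : List (PropForm Atom) := hGfin.toFinset.toList.map g
    refine ⟨PropForm.bigAnd L, ?_, ?_⟩
    · intro x hx
      show x ∈ PropForm.eval σ (PropForm.bigAnd L)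
      rw [PropForm.mem_eval_bigAnd]
      intro χ hχ
      simp only [L, List.mem_map] at hχ
      obtain ⟨t, ht, rfl⟩ := hχ
      rw [Finset.mem_toList, hGfin.mem_toFinset] at ht
      exact hg1 t ht hx
    · intro 𝔄₂ h2 hf2 hint hcap ψ hψ
      obtain ⟨χ, hχ1, hχ2⟩ := hO X 𝔄₁ 𝔄₂ h1 h2 hf1 hf2 hint φ ψ hψ
      let incl : ↥(𝔄₁ ∩ 𝔄₂) → ↥𝔄₀ := fun A => ⟨A.1, hcap A.2⟩
      let χ' : OSF S ↥𝔄₀ := OSF.map S incl χ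
      have hext : OSF.ext S (Subtype.val : ↥𝔄₀ → Set X) χ'
          = OSF.ext S (Subtype.val : ↥(𝔄₁ ∩ 𝔄₂) → Set X) χ := by
        rw [OSF.ext_map]
      have hχ'T : χ' ∈ T := by
        show E ⊆ PropForm.eval σ χ'
        intro x hx
        have : x ∈ OSF.ext S (Subtype.val : ↥𝔄₀ → Set X) χ' := by
          rw [hext]; exact hχ1 hx
        exact this
      have htmem : PropForm.tf χ' ∈ PropForm.tf '' T := ⟨χ', hχ'T, rfl⟩
      intro x hx
      have hx' : x ∈ PropForm.eval σ (PropForm.bigAnd L) := hx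
      rw [PropForm.mem_eval_bigAnd] at hx'
      have hmem : g (PropForm.tf χ') ∈ L := by
        simp only [L, List.mem_map]
        exact ⟨PropForm.tf χ', by rw [Finset.mem_toList, hGfin.mem_toFinset]; exact htmem, rfl⟩
      have := hx' _ hmem
      rw [PropForm.eval_eq_of_tf_eq σ (hg2 _ htmem)] at this
      have : x ∈ OSF.ext S (Subtype.val : ↥𝔄₀ → Set X) χ' := this
      rw [hext] at this
      exact hχ2 this
end

section
/- Let F, Λ, ar, ⟦·⟧ be a set functor with a finite modal signature interpreted by predicate liftings, and let V₀ be a finite set of propositional variables. Then for every n : ℕ, the set of Λ-formulas over V₀ of rank at most n is finite up to logical equivalence, where formulas φ, ψ are logically equivalent if ⟦φ⟧ = ⟦ψ⟧ in every F-model. -/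
open CategoryTheory

universe u v

/-- Modal `Λ`-formulas over propositional variables `V`. -/
inductive MForm {F : Type u ⥤ Type u} (S : ModalSig F) (V : Type) : Type
  | var : V → MForm S V
  | bot : MForm S V
  | neg : MForm S V → MForm S V
  | and : MForm S V → MForm S V → MForm S V
  | mod : (m : S.Λ) → (Fin (S.ar m) → MForm S V) → MForm S V

/-- The rank of a modal formula: maximal nesting depth of modal operators. -/
def MForm.rk {F : Type u ⥤ Type u} {S : ModalSig F} {V : Type} : MForm S V → ℕ
  | .var _ => 0
  | .bot => 0
  | .neg φ => φ.rk
  | .and φ ψ => max φ.rk ψ.rk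
  | .mod _ args => 1 + Finset.univ.sup (fun i => (args i).rk)

/-- The formula mentions only propositional variables from `V₀`. -/
def MForm.varsIn {F : Type u ⥤ Type u} {S : ModalSig F} {V : Type} (V₀ : Set V) :
    MForm S V → Prop
  | .var v => v ∈ V₀
  | .bot => True
  | .neg φ => φ.varsIn V₀
  | .and φ ψ => φ.varsIn V₀ ∧ ψ.varsIn V₀
  | .mod _ args => ∀ i, (args i).varsIn V₀

/-- An `F`-model: a coalgebra with a valuation of the propositional variables. -/
structure CModel (F : Type u ⥤ Type u) (V : Type) : Type (u + 1) where
  X : Type u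
  ξ : X → F.obj X
  τ : V → Set X

/-- The extension (semantics) of a modal formula in a model. -/
def MForm.sem {F : Type u ⥤ Type u} {S : ModalSig F} {V : Type} (M : CModel F V) :
    MForm S V → Set M.X
  | .var v => M.τ v
  | .bot => ∅
  | .neg φ => (φ.sem M)ᶜ
  | .and φ ψ => φ.sem M ∩ ψ.sem M
  | .mod m args => {x | M.ξ x ∈ S.lift m M.X (fun i => (args i).sem M)}

section Aux

open scoped Classical

variable {F : Type u ⥤ Type u} {S : ModalSig F} {V : Type}

/-- Conjunction of a list of modal formulas. -/
def MyAndAll : List (MForm S V) → MForm S V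
  | [] => .neg .bot
  | φ :: l => .and φ (MyAndAll l)

/-- Disjunction of a list of modal formulas. -/
def MyOrAll : List (MForm S V) → MForm S V
  | [] => .bot
  | φ :: l => .neg (.and (.neg φ) (.neg (MyOrAll l)))

lemma mem_sem_myAndAll (M : CModel F V) (x : M.X) :
    ∀ L : List (MForm S V), x ∈ MForm.sem M (MyAndAll L) ↔ ∀ φ ∈ L, x ∈ MForm.sem M φ
  | [] => by simp [MyAndAll, MForm.sem]
  | φ :: l => by
      simp [MyAndAll, MForm.sem, mem_sem_myAndAll M x l]

lemma mem_sem_myOrAll (M : CModel F V) (x : M.X) :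
    ∀ L : List (MForm S V), x ∈ MForm.sem M (MyOrAll L) ↔ ∃ φ ∈ L, x ∈ MForm.sem M φ
  | [] => by simp [MyOrAll, MForm.sem]
  | φ :: l => by
      simp [MyOrAll, MForm.sem, mem_sem_myOrAll M x l]
      tauto

/-- Literal. -/
def MyLit (b : Bool) (φ : MForm S V) : MForm S V := if b then φ else .neg φ

/-- Conjunction of literals specified by a boolean vector. -/
def MyConj (l : List (MForm S V)) (b : Fin l.length → Bool) : MForm S V :=
  MyAndAll ((List.finRange l.length).map (fun i => MyLit (b i) (l.get i)))

/-- DNF over the atoms `l` for the set of satisfying valuations `s`. -/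
noncomputable def MyDNF (l : List (MForm S V)) (s : Finset (Fin l.length → Bool)) : MForm S V :=
  MyOrAll (s.toList.map (MyConj l))

/-- Truth pattern of a point over a list of formulas. -/
noncomputable def MyPatt (M : CModel F V) (l : List (MForm S V)) (x : M.X) :
    Fin l.length → Bool :=
  fun i => decide (x ∈ MForm.sem M (l.get i))

lemma mem_sem_myConj (M : CModel F V) (x : M.X) (l : List (MForm S V))
    (b : Fin l.length → Bool) :
    x ∈ MForm.sem M (MyConj l b) ↔ MyPatt M l x = b := by
  rw [MyConj, mem_sem_myAndAll, funext_iff]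
  simp only [List.mem_map, List.mem_finRange]
  constructor
  · intro h i
    have := h _ ⟨i, trivial, rfl⟩
    cases hb : b i <;> simp [MyLit, hb, MForm.sem, MyPatt] at this ⊢ <;> simp [this]
  · rintro h φ ⟨i, -, rfl⟩
    have := h i
    cases hb : b i <;> simp [MyLit, hb, MForm.sem, MyPatt] at this ⊢ <;> simp_all [MyPatt]

lemma mem_sem_myDNF (M : CModel F V) (x : M.X) (l : List (MForm S V))
    (s : Finset (Fin l.length → Bool)) :
    x ∈ MForm.sem M (MyDNF l s) ↔ MyPatt M l x ∈ s := by
  rw [MyDNF, mem_sem_myOrAll]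
  constructor
  · rintro ⟨φ, hφ, hx⟩
    simp only [List.mem_map, Finset.mem_toList] at hφ
    obtain ⟨b, hb, rfl⟩ := hφ
    rwa [(mem_sem_myConj M x l b).1 hx]
  · intro h
    refine ⟨MyConj l (MyPatt M l x), List.mem_map.2 ⟨_, Finset.mem_toList.2 h, rfl⟩,
      (mem_sem_myConj M x l _).2 rfl⟩

lemma rk_myAndAll (c : ℕ) : ∀ L : List (MForm S V), (∀ φ ∈ L, MForm.rk φ ≤ c) →
    MForm.rk (MyAndAll L) ≤ c
  | [], _ => by simp [MyAndAll, MForm.rk]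
  | φ :: l, h => by
      simp only [MyAndAll, MForm.rk, max_le_iff]
      exact ⟨h φ (by simp), rk_myAndAll c l (fun ψ hψ => h ψ (by simp [hψ]))⟩

lemma rk_myOrAll (c : ℕ) : ∀ L : List (MForm S V), (∀ φ ∈ L, MForm.rk φ ≤ c) →
    MForm.rk (MyOrAll L) ≤ c
  | [], _ => by simp [MyOrAll, MForm.rk]
  | φ :: l, h => by
      simp only [MyOrAll, MForm.rk, max_le_iff]
      exact ⟨h φ (by simp), rk_myOrAll c l (fun ψ hψ => h ψ (by simp [hψ]))⟩

lemma rk_myLit (b : Bool) (φ : MForm S V) : MForm.rk (MyLit b φ) = MForm.rk φ := by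
  cases b <;> simp [MyLit, MForm.rk]

lemma rk_myDNF (c : ℕ) (l : List (MForm S V)) (s : Finset (Fin l.length → Bool))
    (h : ∀ φ ∈ l, MForm.rk φ ≤ c) : MForm.rk (MyDNF l s) ≤ c := by
  apply rk_myOrAll
  intro φ hφ
  simp only [List.mem_map, Finset.mem_toList] at hφ
  obtain ⟨b, -, rfl⟩ := hφ
  apply rk_myAndAll
  intro ψ hψ
  simp only [List.mem_map, List.mem_finRange] at hψ
  obtain ⟨i, -, rfl⟩ := hψ
  rw [rk_myLit]
  exact h _ (l.get_mem i)

lemma varsIn_myAndAll (V₀ : Set V) : ∀ L : List (MForm S V),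
    (∀ φ ∈ L, MForm.varsIn V₀ φ) → MForm.varsIn V₀ (MyAndAll L)
  | [], _ => by simp [MyAndAll, MForm.varsIn]
  | φ :: l, h => ⟨h φ (by simp), varsIn_myAndAll V₀ l (fun ψ hψ => h ψ (by simp [hψ]))⟩

lemma varsIn_myOrAll (V₀ : Set V) : ∀ L : List (MForm S V),
    (∀ φ ∈ L, MForm.varsIn V₀ φ) → MForm.varsIn V₀ (MyOrAll L)
  | [], _ => by simp [MyOrAll, MForm.varsIn]
  | φ :: l, h => ⟨h φ (by simp), varsIn_myOrAll V₀ l (fun ψ hψ => h ψ (by simp [hψ]))⟩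

lemma varsIn_myLit (V₀ : Set V) (b : Bool) (φ : MForm S V) (h : MForm.varsIn V₀ φ) :
    MForm.varsIn V₀ (MyLit b φ) := by
  cases b <;> simpa [MyLit, MForm.varsIn]

lemma varsIn_myDNF (V₀ : Set V) (l : List (MForm S V)) (s : Finset (Fin l.length → Bool))
    (h : ∀ φ ∈ l, MForm.varsIn V₀ φ) : MForm.varsIn V₀ (MyDNF l s) := by
  apply varsIn_myOrAll
  intro φ hφ
  simp only [List.mem_map, Finset.mem_toList] at hφ
  obtain ⟨b, -, rfl⟩ := hφ
  apply varsIn_myAndAll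
  intro ψ hψ
  simp only [List.mem_map, List.mem_finRange] at hψ
  obtain ⟨i, -, rfl⟩ := hψ
  exact varsIn_myLit V₀ _ _ (h _ (l.get_mem i))

lemma eqd_of_atom (l : List (MForm S V)) (φ : MForm S V)
    (h : ∃ i : Fin l.length, ∀ M : CModel F V, MForm.sem M φ = MForm.sem M (l.get i)) :
    ∃ s, ∀ M : CModel F V, MForm.sem M φ = MForm.sem M (MyDNF l s) := by
  obtain ⟨i, hi⟩ := h
  refine ⟨Finset.univ.filter (fun b => b i = true), fun M => ?_⟩
  ext x
  rw [mem_sem_myDNF]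
  simp [MyPatt, hi M]

/-- The main engine: if `Lp` is a finite complete set of representatives for formulas of
rank `< n`, then there is one for formulas of rank `≤ n`. -/
lemma step_lemma {F : Type u ⥤ Type u} (S : ModalSig F) (V : Type) (V₀ : Set V)
    (hV₀ : V₀.Finite) (n : ℕ) (Lp : Set (MForm S V)) (hLp : Lp.Finite)
    (hb : ∀ ψ ∈ Lp, MForm.varsIn V₀ ψ ∧ MForm.rk ψ + 1 ≤ n)
    (hcomp : ∀ φ : MForm S V, MForm.varsIn V₀ φ → MForm.rk φ + 1 ≤ n →
      ∃ ψ ∈ Lp, ∀ M : CModel F V, MForm.sem M φ = MForm.sem M ψ) :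
    ∃ L : Set (MForm S V), L.Finite ∧
      (∀ ψ ∈ L, MForm.varsIn V₀ ψ ∧ MForm.rk ψ ≤ n) ∧
      ∀ φ : MForm S V, MForm.varsIn V₀ φ → MForm.rk φ ≤ n →
        ∃ ψ ∈ L, ∀ M : CModel F V, MForm.sem M φ = MForm.sem M ψ := by
  haveI := S.finite
  set A : Set (MForm S V) := {ψ | (∃ v ∈ V₀, ψ = .var v) ∨
    ∃ m args, (∀ i, args i ∈ Lp) ∧ 1 ≤ n ∧ ψ = .mod m args} with hA
  have hAfin : A.Finite := by
    apply Set.Finite.subset (Set.Finite.union (hV₀.image MForm.var)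
      (Set.finite_iUnion (fun m : S.Λ => Set.Finite.image (fun args => MForm.mod m args)
        (Set.Finite.pi (fun _ : Fin (S.ar m) => hLp)))))
    rintro ψ (⟨v, hv, rfl⟩ | ⟨m, args, hargs, -, rfl⟩)
    · exact Or.inl ⟨v, hv, rfl⟩
    · exact Or.inr (Set.mem_iUnion.2 ⟨m, ⟨args, fun i _ => hargs i, rfl⟩⟩)
  have hAvars : ∀ a ∈ A, MForm.varsIn V₀ a := by
    rintro a (⟨v, hv, rfl⟩ | ⟨m, args, hargs, -, rfl⟩)
    · exact hv
    · exact fun i => (hb _ (hargs i)).1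
  have hArk : ∀ a ∈ A, MForm.rk a ≤ n := by
    rintro a (⟨v, hv, rfl⟩ | ⟨m, args, hargs, hn, rfl⟩)
    · simp [MForm.rk]
    · show 1 + Finset.univ.sup (fun i => (args i).rk) ≤ n
      have hsup : Finset.univ.sup (fun i => (args i).rk) ≤ n - 1 :=
        Finset.sup_le fun i _ => by have := (hb _ (hargs i)).2; omega
      omega
  set l : List (MForm S V) := hAfin.toFinset.toList with hl
  have hmem : ∀ a ∈ A, ∃ i : Fin l.length, l.get i = a := by
    intro a ha
    have : a ∈ l := by rw [hl, Finset.mem_toList, hAfin.mem_toFinset]; exact ha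
    exact List.mem_iff_get.1 this
  have hlA : ∀ a ∈ l, a ∈ A := by
    intro a ha
    rwa [hl, Finset.mem_toList, hAfin.mem_toFinset] at ha
  have key : ∀ φ : MForm S V, MForm.varsIn V₀ φ → MForm.rk φ ≤ n →
      ∃ s, ∀ M : CModel F V, MForm.sem M φ = MForm.sem M (MyDNF l s) := by
    intro φ
    induction φ with
    | var v =>
        intro hv _
        obtain ⟨i, hi⟩ := hmem (.var v) (Or.inl ⟨v, hv, rfl⟩)
        exact eqd_of_atom l _ ⟨i, fun M => by rw [hi]⟩
    | bot =>
        intro _ _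
        refine ⟨∅, fun M => ?_⟩
        ext x
        simp [mem_sem_myDNF, MForm.sem]
    | neg φ ih =>
        intro hv hr
        obtain ⟨s, hs⟩ := ih hv hr
        refine ⟨sᶜ, fun M => ?_⟩
        ext x
        rw [show MForm.sem M (MForm.neg φ) = (MForm.sem M φ)ᶜ from rfl, Set.mem_compl_iff,
          hs M, mem_sem_myDNF, mem_sem_myDNF, Finset.mem_compl]
    | and φ ψ ihφ ihψ =>
        intro hv hr
        rw [show MForm.rk (MForm.and φ ψ) = max φ.rk ψ.rk from rfl, max_le_iff] at hr
        obtain ⟨s₁, hs₁⟩ := ihφ hv.1 hr.1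
        obtain ⟨s₂, hs₂⟩ := ihψ hv.2 hr.2
        refine ⟨s₁ ∩ s₂, fun M => ?_⟩
        ext x
        rw [show MForm.sem M (MForm.and φ ψ) = MForm.sem M φ ∩ MForm.sem M ψ from rfl]
        simp only [Set.mem_inter_iff, hs₁ M, hs₂ M, mem_sem_myDNF, Finset.mem_inter]
    | mod m args ih =>
        intro hv hr
        rw [show MForm.rk (MForm.mod m args) =
          1 + Finset.univ.sup (fun i => (args i).rk) from rfl] at hr
        have h1 : 1 ≤ n := le_trans (by omega) hr
        choose ψ hψmem hψsem using fun i => hcomp (args i) (hv i)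
          (by
            have : (args i).rk ≤ Finset.univ.sup (fun i => (args i).rk) := by
              simpa using Finset.le_sup (f := fun i => (args i).rk) (Finset.mem_univ i)
            omega)
        obtain ⟨i₀, hi₀⟩ := hmem (.mod m ψ) (Or.inr ⟨m, ψ, hψmem, h1, rfl⟩)
        apply eqd_of_atom
        refine ⟨i₀, fun M => ?_⟩
        rw [hi₀]
        have harg : (fun i => MForm.sem M (args i)) = fun i => MForm.sem M (ψ i) :=
          funext fun i => hψsem i M
        show {x | M.ξ x ∈ S.lift m M.X (fun i => MForm.sem M (args i))} = _
        rw [harg]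
        rfl
  refine ⟨Set.range (MyDNF l), Set.finite_range _, ?_, ?_⟩
  · rintro ψ ⟨s, rfl⟩
    exact ⟨varsIn_myDNF V₀ l s (fun a ha => hAvars a (hlA a ha)),
      rk_myDNF n l s (fun a ha => hArk a (hlA a ha))⟩
  · intro φ hvφ hrφ
    obtain ⟨s, hs⟩ := key φ hvφ hrφ
    exact ⟨MyDNF l s, ⟨s, rfl⟩, hs⟩

end Aux


/-- For a finite modal signature and a finite set `V₀` of propositional variables, the set
of `Λ`-formulas over `V₀` of rank at most `n` is finite up to logical equivalence. -/
theorem rank_bounded_formulas_finite_up_to_equivalence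
    {F : Type u ⥤ Type u} (S : ModalSig F) (V : Type) [Countable V]
    (V₀ : Set V) (hV₀ : V₀.Finite) (n : ℕ) :
    ∃ L : Set (MForm S V), L.Finite ∧
      (∀ ψ ∈ L, MForm.varsIn V₀ ψ ∧ MForm.rk ψ ≤ n) ∧
      ∀ φ : MForm S V, MForm.varsIn V₀ φ → MForm.rk φ ≤ n →
        ∃ ψ ∈ L, ∀ M : CModel F V, MForm.sem M φ = MForm.sem M ψ := by
  induction n with
  | zero =>
      exact step_lemma S V V₀ hV₀ 0 ∅ Set.finite_empty (by simp) (by intro φ _ h; omega)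
  | succ n ih =>
      obtain ⟨L, hfin, hbd, hc⟩ := ih
      exact step_lemma S V V₀ hV₀ (n + 1) L hfin
        (fun ψ h => ⟨(hbd ψ h).1, by have := (hbd ψ h).2; omega⟩)
        (fun φ hv hr => hc φ hv (by omega))
end

section
/- Let F, Λ, ar, ⟦·⟧ be a set functor with a finite modal signature interpreted by predicate liftings, over a countable set V of propositional variables. If the logic L(Λ) has interpolation, then the one-step logic over propositional variables has interpolation: whenever φ is a one-step formula over V₁ ⊆ V, ψ is a one-step formula over V₂ ⊆ V, and for every type X and every valuation τ : V → Set X the one-step formula φ → ψ is one-step valid over τ, then there exists a one-step formula ρ over V₁ ∩ V₂ such that φ → ρ and ρ → ψ are one-step valid over every such τ. -/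
open CategoryTheory

universe u v

/-- `L(Λ)` has (Craig) interpolation. -/
def HasInterpolation {F : Type u ⥤ Type u} (S : ModalSig F) (V : Type) : Prop :=
  ∀ (V₁ V₂ : Set V) (φ ψ : MForm S V), MForm.varsIn V₁ φ → MForm.varsIn V₂ ψ →
    (∀ M : CModel F V, MForm.sem M φ ⊆ MForm.sem M ψ) →
    ∃ ρ : MForm S V, MForm.varsIn (V₁ ∩ V₂) ρ ∧
      (∀ M : CModel F V, MForm.sem M φ ⊆ MForm.sem M ρ) ∧
      (∀ M : CModel F V, MForm.sem M ρ ⊆ MForm.sem M ψ)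

section Aux

open scoped Classical

variable {F : Type u ⥤ Type u}

/-- Disjunction of propositional formulas. -/
def PropForm.orF {Z : Type v} (a b : PropForm Z) : PropForm Z :=
  .neg (.and (.neg a) (.neg b))

lemma PropForm.eval_orF {Z : Type v} {X : Type u} (τ : Z → Set X) (a b : PropForm Z) :
    PropForm.eval τ (PropForm.orF a b) = PropForm.eval τ a ∪ PropForm.eval τ b := by
  simp [PropForm.orF, PropForm.eval, Set.compl_inter, compl_compl]

/-- Finite disjunction. -/
def PropForm.bigOr {Z : Type v} (l : List (PropForm Z)) : PropForm Z :=
  l.foldr PropForm.orF .bot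

lemma PropForm.eval_bigOr {Z : Type v} {X : Type u} (τ : Z → Set X) (l : List (PropForm Z))
    (x : X) : x ∈ PropForm.eval τ (PropForm.bigOr l) ↔ ∃ a ∈ l, x ∈ PropForm.eval τ a := by
  induction l with
  | nil => simp [PropForm.bigOr, PropForm.eval]
  | cons a l ih =>
      simp only [PropForm.bigOr, List.foldr, PropForm.eval_orF, Set.mem_union,
        List.mem_cons] at *
      rw [ih]
      constructor
      · rintro (h | ⟨b, hb, h⟩)
        exacts [⟨a, Or.inl rfl, h⟩, ⟨b, Or.inr hb, h⟩]
      · rintro ⟨b, (rfl | hb), h⟩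
        exacts [Or.inl h, Or.inr ⟨b, hb, h⟩]

/-- Embedding of propositional formulas over `V₀ ⊆ V` into modal formulas. -/
def pToM (S : ModalSig F) {V : Type} (V₀ : Set V) : PropForm ↥V₀ → MForm S V
  | .bot => .bot
  | .atom v => .var ↑v
  | .neg p => .neg (pToM S V₀ p)
  | .and p q => .and (pToM S V₀ p) (pToM S V₀ q)

/-- Embedding of one-step formulas into (rank-1) modal formulas. -/
def osfToM (S : ModalSig F) {V : Type} (V₀ : Set V) : OSF S (PropForm ↥V₀) → MForm S V
  | .bot => .bot
  | .atom a => .mod a.1 (fun i => pToM S V₀ (a.2 i))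
  | .neg p => .neg (osfToM S V₀ p)
  | .and p q => .and (osfToM S V₀ p) (osfToM S V₀ q)

lemma varsIn_pToM (S : ModalSig F) {V : Type} (V₀ : Set V) (p : PropForm ↥V₀) :
    MForm.varsIn V₀ (pToM S V₀ p) := by
  induction p with
  | bot => trivial
  | atom v => exact v.2
  | neg p ih => exact ih
  | and p q ihp ihq => exact ⟨ihp, ihq⟩

lemma varsIn_osfToM (S : ModalSig F) {V : Type} (V₀ : Set V) (χ : OSF S (PropForm ↥V₀)) :
    MForm.varsIn V₀ (osfToM S V₀ χ) := by
  induction χ with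
  | bot => trivial
  | atom a => exact fun i => varsIn_pToM S V₀ (a.2 i)
  | neg p ih => exact ih
  | and p q ihp ihq => exact ⟨ihp, ihq⟩

lemma sem_pToM (S : ModalSig F) {V : Type} (V₀ : Set V) (M : CModel F V) (p : PropForm ↥V₀) :
    MForm.sem M (pToM S V₀ p) = PropForm.eval (fun v : ↥V₀ => M.τ ↑v) p := by
  induction p with
  | bot => rfl
  | atom v => rfl
  | neg p ih => simp [pToM, MForm.sem, PropForm.eval, ih]
  | and p q ihp ihq => simp [pToM, MForm.sem, PropForm.eval, ihp, ihq]

lemma sem_osfToM (S : ModalSig F) {V : Type} (V₀ : Set V) (M : CModel F V)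
    (χ : OSF S (PropForm ↥V₀)) :
    MForm.sem M (osfToM S V₀ χ) =
      M.ξ ⁻¹' OSF.ext S (fun p : PropForm ↥V₀ => PropForm.eval (fun v : ↥V₀ => M.τ ↑v) p) χ := by
  induction χ with
  | bot => simp [osfToM, MForm.sem, OSF.ext, PropForm.eval]
  | atom a =>
      ext x
      simp only [osfToM, MForm.sem, OSF.ext, PropForm.eval, Set.mem_setOf_eq, Set.mem_preimage]
      congr! 2
      funext i
      exact sem_pToM S V₀ M (a.2 i)
  | neg p ih => simp [osfToM, MForm.sem, OSF.ext, PropForm.eval, ih]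
  | and p q ihp ihq => simp [osfToM, MForm.sem, OSF.ext, PropForm.eval, ihp, ihq]

/-- Value of a modal formula at "copy" points whose transition is `F.map inl t₀`. -/
def pval (S : ModalSig F) {V : Type} (X : Type u) (τ : V → Set X) (t₀ : F.obj X) :
    MForm S V → Set X
  | .var v => τ v
  | .bot => ∅
  | .neg φ => (pval S X τ t₀ φ)ᶜ
  | .and φ ψ => pval S X τ t₀ φ ∩ pval S X τ t₀ ψ
  | .mod m args => {_x | t₀ ∈ S.lift m X (fun i => pval S X τ t₀ (args i))}

/-- The truth values of deep modal subformulas determined by `(X, τ, t₀)`. -/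
def cOf (S : ModalSig F) {V : Type} (X : Type u) (τ : V → Set X) (t₀ : F.obj X) :
    MForm S V → Prop
  | .mod m args => t₀ ∈ S.lift m X (fun i => pval S X τ t₀ (args i))
  | _ => False

/-- Mixed value: variables from `τ` on `X`, modal subformulas constant via `(X', τ', t₀')`. -/
def pval2 (S : ModalSig F) {V : Type} (X' : Type u) (τ' : V → Set X') (t₀' : F.obj X')
    (X : Type u) (τ : V → Set X) : MForm S V → Set X
  | .var v => τ v
  | .bot => ∅
  | .neg φ => (pval2 S X' τ' t₀' X τ φ)ᶜ
  | .and φ ψ => pval2 S X' τ' t₀' X τ φ ∩ pval2 S X' τ' t₀' X τ ψ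
  | .mod m args => {_x | t₀' ∈ S.lift m X' (fun i => pval S X' τ' t₀' (args i))}

/-- Propositional projection of a modal formula given values `c` for modal subformulas. -/
noncomputable def projC (S : ModalSig F) {V : Type} (W : Set V) (c : MForm S V → Prop) :
    MForm S V → PropForm ↥W
  | .var v => if h : v ∈ W then .atom ⟨v, h⟩ else .bot
  | .bot => .bot
  | .neg φ => .neg (projC S W c φ)
  | .and φ ψ => .and (projC S W c φ) (projC S W c ψ)
  | .mod m args => if c (.mod m args) then .neg .bot else .bot

/-- Rank-1 truncation of a modal formula given values `c` for deep modal subformulas. -/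
noncomputable def truncC (S : ModalSig F) {V : Type} (W : Set V) (c : MForm S V → Prop) :
    MForm S V → OSF S (PropForm ↥W)
  | .var _ => .bot
  | .bot => .bot
  | .neg φ => .neg (truncC S W c φ)
  | .and φ ψ => .and (truncC S W c φ) (truncC S W c ψ)
  | .mod m args => .atom ⟨m, fun i => projC S W c (args i)⟩

/-- The list of modal subformulas of a modal formula. -/
def msub (S : ModalSig F) {V : Type} : MForm S V → List (MForm S V)
  | .var _ => []
  | .bot => []
  | .neg φ => msub S φ
  | .and φ ψ => msub S φ ++ msub S ψ
  | .mod m args => .mod m args :: (List.ofFn (fun i => msub S (args i))).flatten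

lemma projC_congr (S : ModalSig F) {V : Type} (W : Set V) (c c' : MForm S V → Prop)
    (σ : MForm S V) (h : ∀ σ' ∈ msub S σ, (c σ' ↔ c' σ')) :
    projC S W c σ = projC S W c' σ := by
  induction σ with
  | var v => rfl
  | bot => rfl
  | neg φ ih => simp only [projC]; rw [ih h]
  | and φ ψ ihφ ihψ =>
      simp only [projC]
      rw [ihφ (fun σ' hσ' => h σ' (by simp [msub, hσ'])),
        ihψ (fun σ' hσ' => h σ' (by simp [msub, hσ']))]
  | mod m args ih =>
      have hm : c (.mod m args) ↔ c' (.mod m args) := h _ (by simp [msub])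
      simp only [projC]
      by_cases hc : c (.mod m args)
      · rw [if_pos hc, if_pos (hm.mp hc)]
      · rw [if_neg hc, if_neg (fun hc' => hc (hm.mpr hc'))]

lemma truncC_congr (S : ModalSig F) {V : Type} (W : Set V) (c c' : MForm S V → Prop)
    (σ : MForm S V) (h : ∀ σ' ∈ msub S σ, (c σ' ↔ c' σ')) :
    truncC S W c σ = truncC S W c' σ := by
  induction σ with
  | var v => rfl
  | bot => rfl
  | neg φ ih => simp only [truncC]; rw [ih h]
  | and φ ψ ihφ ihψ =>
      simp only [truncC]
      rw [ihφ (fun σ' hσ' => h σ' (by simp [msub, hσ'])),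
        ihψ (fun σ' hσ' => h σ' (by simp [msub, hσ']))]
  | mod m args ih =>
      simp only [truncC]
      have harg : (fun i => projC S W c (args i)) = (fun i => projC S W c' (args i)) := by
        funext i
        refine projC_congr S W c c' (args i) (fun σ' hσ' => h σ' ?_)
        simp only [msub, List.mem_cons, List.mem_flatten]
        exact Or.inr ⟨msub S (args i), by simp only [List.mem_ofFn]; exact ⟨i, rfl⟩, hσ'⟩
      rw [harg]

lemma eval_projC (S : ModalSig F) {V : Type} (W : Set V) (X' : Type u) (τ' : V → Set X')
    (t₀' : F.obj X') (X : Type u) (τ : V → Set X) (σ : MForm S V) (hσ : σ.varsIn W) :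
    PropForm.eval (fun v : ↥W => τ ↑v) (projC S W (cOf S X' τ' t₀') σ) =
      pval2 S X' τ' t₀' X τ σ := by
  induction σ with
  | var v =>
      have hv : v ∈ W := hσ
      simp only [projC]
      rw [dif_pos hv]
      rfl
  | bot => rfl
  | neg φ ih => simp only [projC, PropForm.eval, pval2]; rw [ih hσ]
  | and φ ψ ihφ ihψ =>
      simp only [projC, PropForm.eval, pval2]
      rw [ihφ hσ.1, ihψ hσ.2]
  | mod m args ih =>
      simp only [projC]
      by_cases hc : cOf S X' τ' t₀' (.mod m args)
      · rw [if_pos hc]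
        have ht : t₀' ∈ S.lift m X' (fun i => pval S X' τ' t₀' (args i)) := hc
        ext x
        simp [PropForm.eval, pval2, ht]
      · rw [if_neg hc]
        have ht : t₀' ∉ S.lift m X' (fun i => pval S X' τ' t₀' (args i)) := hc
        ext x
        simp [PropForm.eval, pval2, ht]

/-- The mixed model: a copy of `X'` (realizing deep constants), a copy of `X` (whose points
transition like `X'`-points), and a copy of `F.obj X` (the one-step points over `X`). -/
def mixModel (S : ModalSig F) {V : Type} (X' : Type u) (τ' : V → Set X') (t₀' : F.obj X')
    (X : Type u) (τ : V → Set X) : CModel F V where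
  X := X' ⊕ (X ⊕ F.obj X)
  ξ := fun z => match z with
    | .inl _ => F.map (TypeCat.ofHom Sum.inl) t₀'
    | .inr (.inl _) => F.map (TypeCat.ofHom Sum.inl) t₀'
    | .inr (.inr s) => F.map (TypeCat.ofHom (Sum.inr ∘ Sum.inl)) s
  τ := fun v => Sum.inl '' τ' v ∪ (Sum.inr ∘ Sum.inl) '' τ v

variable {V : Type} (S : ModalSig F) (X' : Type u) (τ' : V → Set X') (t₀' : F.obj X')
  (X : Type u) (τ : V → Set X)

lemma mix_inl_sem (σ : MForm S V) :
    Sum.inl ⁻¹' MForm.sem (mixModel S X' τ' t₀' X τ) σ = pval S X' τ' t₀' σ := by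
  induction σ with
  | var v =>
      show Sum.inl ⁻¹' (Sum.inl '' τ' v ∪ (Sum.inr ∘ Sum.inl) '' τ v) = τ' v
      ext x
      simp [Sum.inl_injective.eq_iff]
  | bot => rfl
  | neg φ ih => exact congrArg (fun s : Set X' => sᶜ) ih
  | and φ ψ ihφ ihψ => exact congrArg₂ (· ∩ ·) ihφ ihψ
  | mod m args ih =>
      ext x
      show F.map (TypeCat.ofHom Sum.inl) t₀' ∈ S.lift m _ _ ↔ x ∈ pval S X' τ' t₀' (.mod m args)
      have hnat := S.natural m X' (X' ⊕ (X ⊕ F.obj X)) Sum.inl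
        (fun i => MForm.sem (mixModel S X' τ' t₀' X τ) (args i))
      rw [← Set.mem_preimage, ← hnat]
      have : (fun i => Sum.inl ⁻¹' MForm.sem (mixModel S X' τ' t₀' X τ) (args i)) =
          (fun i => pval S X' τ' t₀' (args i)) := funext fun i => ih i
      rw [this]
      rfl

lemma mix_mid_sem (σ : MForm S V) :
    (Sum.inr ∘ Sum.inl) ⁻¹' MForm.sem (mixModel S X' τ' t₀' X τ) σ =
      pval2 S X' τ' t₀' X τ σ := by
  induction σ with
  | var v =>
      show (Sum.inr ∘ Sum.inl) ⁻¹' (Sum.inl '' τ' v ∪ (Sum.inr ∘ Sum.inl) '' τ v) = τ v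
      ext x
      simp [Function.comp, Sum.inl_injective.eq_iff]
  | bot => rfl
  | neg φ ih => exact congrArg (fun s : Set X => sᶜ) ih
  | and φ ψ ihφ ihψ => exact congrArg₂ (· ∩ ·) ihφ ihψ
  | mod m args ih =>
      ext x
      show F.map (TypeCat.ofHom Sum.inl) t₀' ∈ S.lift m _ _ ↔ x ∈ pval2 S X' τ' t₀' X τ (.mod m args)
      have hnat := S.natural m X' (X' ⊕ (X ⊕ F.obj X)) Sum.inl
        (fun i => MForm.sem (mixModel S X' τ' t₀' X τ) (args i))
      rw [← Set.mem_preimage, ← hnat]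
      have : (fun i => Sum.inl ⁻¹' MForm.sem (mixModel S X' τ' t₀' X τ) (args i)) =
          (fun i => pval S X' τ' t₀' (args i)) :=
        funext fun i => mix_inl_sem S X' τ' t₀' X τ (args i)
      rw [this]
      rfl

lemma pval2_pToM (V₀ : Set V) (p : PropForm ↥V₀) :
    pval2 S X' τ' t₀' X τ (pToM S V₀ p) = PropForm.eval (fun v : ↥V₀ => τ ↑v) p := by
  induction p with
  | bot => rfl
  | atom v => rfl
  | neg p ih => simp only [pToM, pval2, PropForm.eval, ih]
  | and p q ihp ihq => simp only [pToM, pval2, PropForm.eval, ihp, ihq]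

lemma mix_top_sem (W : Set V) (σ : MForm S V) (hσ : σ.varsIn W) :
    (Sum.inr ∘ Sum.inr) ⁻¹' MForm.sem (mixModel S X' τ' t₀' X τ) σ =
      OSF.ext S (fun p : PropForm ↥W => PropForm.eval (fun v : ↥W => τ ↑v) p)
        (truncC S W (cOf S X' τ' t₀') σ) := by
  induction σ with
  | var v =>
      show (Sum.inr ∘ Sum.inr) ⁻¹' (Sum.inl '' τ' v ∪ (Sum.inr ∘ Sum.inl) '' τ v) = _
      ext s
      simp [truncC, OSF.ext, PropForm.eval, Function.comp]
  | bot => rfl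
  | neg φ ih =>
      simp only [MForm.sem, truncC, OSF.ext, PropForm.eval, Set.preimage_compl]
      exact congrArg (fun s : Set (F.obj X) => sᶜ) (ih hσ)
  | and φ ψ ihφ ihψ =>
      simp only [MForm.sem, truncC, OSF.ext, PropForm.eval, Set.preimage_inter]
      exact congrArg₂ (· ∩ ·) (ihφ hσ.1) (ihψ hσ.2)
  | mod m args ih =>
      ext s
      show F.map (TypeCat.ofHom (Sum.inr ∘ Sum.inl)) s ∈ S.lift m _ _ ↔ _
      have hnat := S.natural m X (X' ⊕ (X ⊕ F.obj X)) (Sum.inr ∘ Sum.inl)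
        (fun i => MForm.sem (mixModel S X' τ' t₀' X τ) (args i))
      rw [← Set.mem_preimage, ← hnat]
      have harg : (fun i => (Sum.inr ∘ Sum.inl) ⁻¹'
            MForm.sem (mixModel S X' τ' t₀' X τ) (args i)) =
          (fun i => PropForm.eval (fun v : ↥W => τ ↑v)
            (projC S W (cOf S X' τ' t₀') (args i))) := by
        funext i
        rw [mix_mid_sem S X' τ' t₀' X τ (args i), eval_projC S W X' τ' t₀' X τ (args i) (hσ i)]
      rw [harg]
      rfl

lemma mix_top_sem_osf (V₀ : Set V) (χ : OSF S (PropForm ↥V₀)) :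
    (Sum.inr ∘ Sum.inr) ⁻¹' MForm.sem (mixModel S X' τ' t₀' X τ) (osfToM S V₀ χ) =
      OSF.ext S (fun p : PropForm ↥V₀ => PropForm.eval (fun v : ↥V₀ => τ ↑v) p) χ := by
  induction χ with
  | bot => rfl
  | atom a =>
      ext s
      show F.map (TypeCat.ofHom (Sum.inr ∘ Sum.inl)) s ∈ S.lift a.1 _ _ ↔ _
      have hnat := S.natural a.1 X (X' ⊕ (X ⊕ F.obj X)) (Sum.inr ∘ Sum.inl)
        (fun i => MForm.sem (mixModel S X' τ' t₀' X τ) (pToM S V₀ (a.2 i)))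
      rw [← Set.mem_preimage, ← hnat]
      have harg : (fun i => (Sum.inr ∘ Sum.inl) ⁻¹'
            MForm.sem (mixModel S X' τ' t₀' X τ) (pToM S V₀ (a.2 i))) =
          (fun i => PropForm.eval (fun v : ↥V₀ => τ ↑v) (a.2 i)) := by
        funext i
        rw [mix_mid_sem S X' τ' t₀' X τ (pToM S V₀ (a.2 i)),
          pval2_pToM S X' τ' t₀' X τ V₀ (a.2 i)]
      rw [harg]
      rfl
  | neg p ih =>
      simp only [osfToM, MForm.sem, OSF.ext, PropForm.eval, Set.preimage_compl]
      exact congrArg (fun s : Set (F.obj X) => sᶜ) ih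
  | and p q ihp ihq =>
      simp only [osfToM, MForm.sem, OSF.ext, PropForm.eval, Set.preimage_inter]
      exact congrArg₂ (· ∩ ·) ihp ihq

variable (ρm : MForm S V)

/-- Boolean vectors over the modal subformulas of `ρm` as candidate constant values. -/
def cB (L : List (MForm S V)) (b : Fin L.length → Bool) : MForm S V → Prop :=
  fun σ => ∃ i, L.get i = σ ∧ b i = true

/-- A candidate vector is realizable if it arises from some `(X, τ, t₀)`. -/
def RealOf (L : List (MForm S V)) (b : Fin L.length → Bool) : Prop :=
  ∃ (X : Type u) (τ : V → Set X) (t₀ : F.obj X), ∀ σ ∈ L, (cB S L b σ ↔ cOf S X τ t₀ σ)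

/-- Disjunct associated to a candidate vector. -/
noncomputable def θF (W : Set V) (b : Fin (msub S ρm).length → Bool) :
    OSF S (PropForm ↥W) :=
  if RealOf S (msub S ρm) b then truncC S W (cB S (msub S ρm) b) ρm else .bot

/-- The one-step interpolant: disjunction of the realizable truncations of `ρm`. -/
noncomputable def interpolant (W : Set V) : OSF S (PropForm ↥W) :=
  PropForm.bigOr
    (((Finset.univ : Finset (Fin (msub S ρm).length → Bool)).toList).map (θF S ρm W))

end Aux
/-- If `L(Λ)` has interpolation, then the one-step logic over propositional variables has
interpolation: any one-step valid implication between a one-step formula over `V₁` and one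
over `V₂` has an interpolant over `V₁ ∩ V₂`, one-step valid over every valuation. -/
theorem interpolation_implies_one_step_variable_interpolation
    {F : Type u ⥤ Type u} (S : ModalSig F) (V : Type) [Countable V]
    (hinterp : HasInterpolation S V)
    (V₁ V₂ : Set V) (φ : OSF S (PropForm ↥V₁)) (ψ : OSF S (PropForm ↥V₂))
    (hval : ∀ (X : Type u) (τ : V → Set X),
      OSF.ext S (fun p : PropForm ↥V₁ => PropForm.eval (fun v : ↥V₁ => τ ↑v) p) φ ⊆
      OSF.ext S (fun p : PropForm ↥V₂ => PropForm.eval (fun v : ↥V₂ => τ ↑v) p) ψ) :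
    ∃ ρ : OSF S (PropForm ↥(V₁ ∩ V₂)),
      (∀ (X : Type u) (τ : V → Set X),
        OSF.ext S (fun p : PropForm ↥V₁ => PropForm.eval (fun v : ↥V₁ => τ ↑v) p) φ ⊆
        OSF.ext S (fun p : PropForm ↥(V₁ ∩ V₂) =>
          PropForm.eval (fun v : ↥(V₁ ∩ V₂) => τ ↑v) p) ρ) ∧
      (∀ (X : Type u) (τ : V → Set X),
        OSF.ext S (fun p : PropForm ↥(V₁ ∩ V₂) =>
          PropForm.eval (fun v : ↥(V₁ ∩ V₂) => τ ↑v) p) ρ ⊆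
        OSF.ext S (fun p : PropForm ↥V₂ => PropForm.eval (fun v : ↥V₂ => τ ↑v) p) ψ) := by
  classical
  have hsem : ∀ M : CModel F V, MForm.sem M (osfToM S V₁ φ) ⊆ MForm.sem M (osfToM S V₂ ψ) := by
    intro M
    rw [sem_osfToM, sem_osfToM]
    exact Set.preimage_mono (hval M.X M.τ)
  obtain ⟨ρm, hρvars, h1, h2⟩ :=
    hinterp V₁ V₂ _ _ (varsIn_osfToM S V₁ φ) (varsIn_osfToM S V₂ ψ) hsem
  refine ⟨interpolant S ρm (V₁ ∩ V₂), ?_, ?_⟩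
  · -- first inclusion
    intro X τ t ht
    have hφ : Sum.inr (Sum.inr t) ∈ MForm.sem (mixModel S X τ t X τ) (osfToM S V₁ φ) := by
      have h := mix_top_sem_osf S X τ t X τ V₁ φ
      have : t ∈ (Sum.inr ∘ Sum.inr) ⁻¹'
          MForm.sem (mixModel S X τ t X τ) (osfToM S V₁ φ) := h ▸ ht
      exact this
    have hρ := h1 _ hφ
    have ht' : t ∈ OSF.ext S
        (fun p : PropForm ↥(V₁ ∩ V₂) => PropForm.eval (fun v : ↥(V₁ ∩ V₂) => τ ↑v) p)
        (truncC S (V₁ ∩ V₂) (cOf S X τ t) ρm) := by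
      have h := mix_top_sem S X τ t X τ (V₁ ∩ V₂) ρm hρvars
      have : t ∈ (Sum.inr ∘ Sum.inr) ⁻¹' MForm.sem (mixModel S X τ t X τ) ρm := hρ
      exact h ▸ this
    set L := msub S ρm with hLdef
    set b : Fin L.length → Bool := fun i => if cOf S X τ t (L.get i) then true else false
      with hbdef
    have hagree : ∀ σ ∈ L, (cB S L b σ ↔ cOf S X τ t σ) := by
      intro σ hσ
      constructor
      · rintro ⟨i, rfl, hbi⟩
        by_contra hc
        rw [hbdef] at hbi
        simp only [if_neg hc] at hbi
        exact Bool.false_ne_true hbi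
      · intro hc
        obtain ⟨i, hi⟩ := List.mem_iff_get.mp hσ
        exact ⟨i, hi, by rw [hbdef]; simp only [hi, if_pos hc]⟩
    have hReal : RealOf S L b := ⟨X, τ, t, hagree⟩
    have hθ : θF S ρm (V₁ ∩ V₂) b = truncC S (V₁ ∩ V₂) (cOf S X τ t) ρm := by
      rw [θF]
      exact (if_pos hReal).trans (truncC_congr S (V₁ ∩ V₂) _ _ ρm hagree)
    refine (PropForm.eval_bigOr _ _ t).mpr ⟨θF S ρm (V₁ ∩ V₂) b, ?_, ?_⟩
    · exact List.mem_map.mpr ⟨b, Finset.mem_toList.mpr (Finset.mem_univ b), rfl⟩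
    · rw [hθ]
      exact ht'
  · -- second inclusion
    intro X τ t ht
    obtain ⟨a, ha, hta⟩ := (PropForm.eval_bigOr _ _ t).mp ht
    obtain ⟨b, hbmem, rfl⟩ := List.mem_map.mp ha
    by_cases hReal : RealOf S (msub S ρm) b
    · obtain ⟨X', τ', t₀', hagree⟩ := hReal
      have hθ : θF S ρm (V₁ ∩ V₂) b = truncC S (V₁ ∩ V₂) (cOf S X' τ' t₀') ρm := by
        rw [θF]
        exact (if_pos (⟨X', τ', t₀', hagree⟩ : RealOf S (msub S ρm) b)).trans
          (truncC_congr S (V₁ ∩ V₂) _ _ ρm hagree)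
      rw [hθ] at hta
      have hmem : t ∈ (Sum.inr ∘ Sum.inr) ⁻¹'
          MForm.sem (mixModel S X' τ' t₀' X τ) ρm := by
        rw [mix_top_sem S X' τ' t₀' X τ (V₁ ∩ V₂) ρm hρvars]
        exact hta
      have hψ := h2 _ hmem
      have h := mix_top_sem_osf S X' τ' t₀' X τ V₂ ψ
      have : t ∈ (Sum.inr ∘ Sum.inr) ⁻¹'
          MForm.sem (mixModel S X' τ' t₀' X τ) (osfToM S V₂ ψ) := hψ
      exact h ▸ this
    · rw [show θF S ρm (V₁ ∩ V₂) b = PropForm.bot from if_neg hReal] at hta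
      exact absurd hta (by simp [OSF.ext, PropForm.eval])
end
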